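/- arXiv:2503.23884 — 5 statements merged into one kernel-verified Lean document; each statement's English description precedes it below -/
import Mathlib

section
/- (Proposition 1, power stability of the sampled-data map.) Assume θ_f < ξ/(M N ‖B‖). Then there exists τ* > 0 such that for every τ ∈ (0, τ*) the map Ψ_τ is power stable: there exists q ∈ (0,1) such that for every x₀ ∈ H the sequence x_{k+1} = Ψ_τ(x_k), x₀ given, satisfies ‖x_k‖ ≤ N q^k ‖x₀‖ for all k ∈ ℕ. -/
set_option maxHeartbeats 1000000 in
/-- Proposition 1: power stability of the sampled-data map
`Ψ_τ(x) = T(τ)x + ∫₀^τ T(s) B f(Fx) ds`.  Under the sector condition with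
`θ_f < ξ/(M N ‖B‖)`, and the assumption (supplied by [LRT03, Thm 3.1]) that, in an
equivalent norm `[[·]]` with `‖x‖ ≤ [[x]] ≤ N‖x‖`, the linear sampled map
`Δ_τ(x) = T(τ)x + ∫₀^τ T(s)BFx ds` satisfies `[[Δ_τ x]] ≤ (1 − ξτ + r(τ))[[x]]`
with `r(τ) = o(τ)` as `τ → 0⁺`, there exists `τ* > 0` such that for every
`τ ∈ (0, τ*)` there is `q ∈ (0,1)` with: every trajectory `x_{k+1} = Ψ_τ(x_k)`
satisfies `‖x_k‖ ≤ N q^k ‖x₀‖`. -/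
theorem stmt6
    {H : Type*} [NormedAddCommGroup H] [InnerProductSpace ℝ H] [CompleteSpace H]
    {U : Type*} [NormedAddCommGroup U] [InnerProductSpace ℝ U] [CompleteSpace U]
    (T : ℝ → H →L[ℝ] H) (M ν : ℝ) (hM : 1 ≤ M) (hν : 0 < ν)
    (hT0 : T 0 = ContinuousLinearMap.id ℝ H)
    (hTadd : ∀ s t : ℝ, 0 ≤ s → 0 ≤ t → T (t + s) = (T t).comp (T s))
    (hTcont : ∀ x : H, ContinuousOn (fun t => T t x) (Set.Ici 0))
    (hTnorm : ∀ t : ℝ, 0 ≤ t → ‖T t‖ ≤ M * Real.exp (ν * t))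
    (B : U →L[ℝ] H) (F : H →L[ℝ] U) (f : U → U) (θf : ℝ) (hθf : 0 < θf)
    (hsector : ∀ x : H, ‖f (F x) - F x‖ ≤ θf * ‖x‖)
    -- the equivalent norm [[·]] on H
    (N : ℝ) (hN : 1 ≤ N) (nn : H → ℝ)
    (hnn_add : ∀ x y : H, nn (x + y) ≤ nn x + nn y)
    (hnn_smul : ∀ (c : ℝ) (x : H), nn (c • x) = |c| * nn x)
    (hnn_equiv : ∀ x : H, ‖x‖ ≤ nn x ∧ nn x ≤ N * ‖x‖)
    -- [LRT03, Theorem 3.1]: [[Δ_τ]] ≤ 1 − ξτ + o(τ), τ → 0⁺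
    (ξ τ₀ : ℝ) (hξ : 0 < ξ) (hτ₀ : 0 < τ₀) (r : ℝ → ℝ)
    (hr : Filter.Tendsto (fun τ => r τ / τ) (nhdsWithin 0 (Set.Ioi 0)) (nhds 0))
    (hΔ : ∀ τ : ℝ, 0 < τ → τ < τ₀ → ∀ x : H,
      nn (T τ x + ∫ s in (0:ℝ)..τ, T s (B (F x))) ≤ (1 - ξ * τ + r τ) * nn x)
    -- the smallness condition (11): θ_f < ξ / (M N ‖B‖)
    (hsmall : θf < ξ / (M * N * ‖B‖)) :
    ∃ τs : ℝ, 0 < τs ∧ ∀ τ : ℝ, 0 < τ → τ < τs →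
      ∃ q : ℝ, 0 < q ∧ q < 1 ∧
        ∀ x : ℕ → H,
          (∀ k : ℕ, x (k + 1) = T τ (x k) + ∫ s in (0:ℝ)..τ, T s (B (f (F (x k))))) →
          ∀ k : ℕ, ‖x k‖ ≤ N * q ^ k * ‖x 0‖ := by

  have hM0 : (0:ℝ) < M := lt_of_lt_of_le one_pos hM
  have hN0 : (0:ℝ) < N := lt_of_lt_of_le one_pos hN
  have hB : 0 < M * N * ‖B‖ := by
    by_contra h
    push_neg at h
    have : ξ / (M * N * ‖B‖) ≤ 0 := div_nonpos_of_nonneg_of_nonpos hξ.le h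
    linarith
  set c : ℝ := θf * (M * N * ‖B‖) with hc
  have hc0 : 0 < c := mul_pos hθf hB
  have hcξ : c < ξ := by
    have := (lt_div_iff₀ hB).mp hsmall
    linarith
  set ε : ℝ := (ξ - c) / 2 with hε_def
  have hε : 0 < ε := by
    rw [hε_def]; linarith
  -- eventual smallness of r τ / τ
  have h1 : ∀ᶠ τ in nhdsWithin 0 (Set.Ioi 0), |r τ / τ| < ε := by
    have := (Metric.tendsto_nhds.mp hr) ε hε
    filter_upwards [this] with τ hτ
    rw [Real.dist_eq, sub_zero] at hτ
    exact hτ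
  obtain ⟨τ₁, hτ₁pos, hτ₁⟩ := Metric.mem_nhdsWithin_iff.mp h1
  -- eventual smallness of c * exp (ν τ)
  have h2 : ∀ᶠ t in nhds (0:ℝ), c * Real.exp (ν * t) < c + ε := by
    have hcont : Continuous fun t : ℝ => c * Real.exp (ν * t) := by continuity
    have htend : Filter.Tendsto (fun t : ℝ => c * Real.exp (ν * t)) (nhds 0)
        (nhds (c * Real.exp (ν * 0))) := hcont.tendsto 0
    have : c * Real.exp (ν * 0) = c := by simp
    rw [this] at htend
    exact htend.eventually_lt_const (by linarith)
  obtain ⟨τ₂, hτ₂pos, hτ₂⟩ := Metric.eventually_nhds_iff.mp h2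
  refine ⟨min (min τ₀ τ₁) (min τ₂ (1 / (ξ + ε))), by positivity, ?_⟩
  intro τ hτ hτs
  have hττ₀ : τ < τ₀ := lt_of_lt_of_le hτs (le_trans (min_le_left _ _) (min_le_left _ _))
  have hττ₁ : τ < τ₁ := lt_of_lt_of_le hτs (le_trans (min_le_left _ _) (min_le_right _ _))
  have hττ₂ : τ < τ₂ := lt_of_lt_of_le hτs (le_trans (min_le_right _ _) (min_le_left _ _))
  have hτξε : τ < 1 / (ξ + ε) :=
    lt_of_lt_of_le hτs (le_trans (min_le_right _ _) (min_le_right _ _))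
  have hτξε' : τ * (ξ + ε) < 1 := by
    rw [lt_div_iff₀ (by linarith : (0:ℝ) < ξ + ε)] at hτξε
    linarith
  have hrτ : |r τ / τ| < ε := hτ₁ ⟨by simpa [Real.dist_eq, abs_of_pos hτ] using hττ₁, hτ⟩
  have hrτ' := abs_lt.mp hrτ
  have hrup : r τ < ε * τ := by
    have := mul_lt_mul_of_pos_right hrτ'.2 hτ
    rwa [div_mul_cancel₀ _ (ne_of_gt hτ)] at this
  have hrlo : -(ε * τ) < r τ := by
    have := mul_lt_mul_of_pos_right hrτ'.1 hτ
    rw [div_mul_cancel₀ _ (ne_of_gt hτ)] at this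
    linarith
  have hexp : c * Real.exp (ν * τ) < c + ε :=
    hτ₂ (by simpa [Real.dist_eq, abs_of_pos hτ] using hττ₂)
  have hexp0 : (0:ℝ) < Real.exp (ν * τ) := Real.exp_pos _
  set q : ℝ := 1 - ξ * τ + r τ + c * Real.exp (ν * τ) * τ with hq
  have hce0 : 0 ≤ c * Real.exp (ν * τ) * τ := by positivity
  have hq0 : 0 < q := by
    have h4 : ξ * τ + ε * τ = τ * (ξ + ε) := by ring
    rw [hq]; linarith
  have hq1 : q < 1 := by
    have h3 : c * Real.exp (ν * τ) * τ < (c + ε) * τ :=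
      mul_lt_mul_of_pos_right hexp hτ
    rw [hq]
    have h4 : (c + ε) * τ + ε * τ = ξ * τ := by rw [hε_def]; ring
    linarith
  refine ⟨q, hq0, hq1, ?_⟩
  -- the one-step contraction in the equivalent norm
  have key : ∀ y : H, nn (T τ y + ∫ s in (0:ℝ)..τ, T s (B (f (F y)))) ≤ q * nn y := by
    intro y
    have hsub : Set.uIcc (0:ℝ) τ ⊆ Set.Ici 0 := by
      rw [Set.uIcc_of_le hτ.le]
      exact Set.Icc_subset_Ici_self
    have hi1 : IntervalIntegrable (fun s => T s (B (F y))) MeasureTheory.volume 0 τ :=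
      ((hTcont (B (F y))).mono hsub).intervalIntegrable
    have hi2 : IntervalIntegrable (fun s => T s (B (f (F y) - F y)))
        MeasureTheory.volume 0 τ :=
      ((hTcont (B (f (F y) - F y))).mono hsub).intervalIntegrable
    have hsplit : (∫ s in (0:ℝ)..τ, T s (B (f (F y))))
        = (∫ s in (0:ℝ)..τ, T s (B (F y)))
          + ∫ s in (0:ℝ)..τ, T s (B (f (F y) - F y)) := by
      rw [← intervalIntegral.integral_add hi1 hi2]
      apply intervalIntegral.integral_congr
      intro s _
      show T s (B (f (F y))) = T s (B (F y)) + T s (B (f (F y) - F y))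
      rw [← map_add, ← map_add, add_sub_cancel]
    set E : H := ∫ s in (0:ℝ)..τ, T s (B (f (F y) - F y)) with hE
    have hEnorm : ‖E‖ ≤ M * Real.exp (ν * τ) * ‖B‖ * (θf * ‖y‖) * τ := by
      have hbound : ∀ s ∈ Set.uIoc (0:ℝ) τ,
          ‖T s (B (f (F y) - F y))‖ ≤ M * Real.exp (ν * τ) * ‖B‖ * (θf * ‖y‖) := by
        intro s hs
        rw [Set.uIoc_of_le hτ.le] at hs
        have hTs : ‖T s‖ ≤ M * Real.exp (ν * s) := hTnorm s hs.1.le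
        have hexps : Real.exp (ν * s) ≤ Real.exp (ν * τ) :=
          Real.exp_le_exp.mpr (by nlinarith [hs.2])
        calc ‖T s (B (f (F y) - F y))‖
            ≤ ‖T s‖ * ‖B (f (F y) - F y)‖ := (T s).le_opNorm _
          _ ≤ (M * Real.exp (ν * s)) * (‖B‖ * ‖f (F y) - F y‖) := by
              gcongr
              exact B.le_opNorm _
          _ ≤ (M * Real.exp (ν * τ)) * (‖B‖ * (θf * ‖y‖)) := by
              gcongr
              exact hsector y
          _ = M * Real.exp (ν * τ) * ‖B‖ * (θf * ‖y‖) := by ring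
      have := intervalIntegral.norm_integral_le_of_norm_le_const hbound
      rw [sub_zero, abs_of_pos hτ] at this
      exact this
    have hEnn : nn E ≤ c * Real.exp (ν * τ) * τ * nn y := by
      calc nn E ≤ N * ‖E‖ := (hnn_equiv E).2
        _ ≤ N * (M * Real.exp (ν * τ) * ‖B‖ * (θf * ‖y‖) * τ) := by
            gcongr
        _ = (c * Real.exp (ν * τ) * τ) * ‖y‖ := by rw [hc]; ring
        _ ≤ (c * Real.exp (ν * τ) * τ) * nn y :=
            mul_le_mul_of_nonneg_left (hnn_equiv y).1 hce0
    calc nn (T τ y + ∫ s in (0:ℝ)..τ, T s (B (f (F y))))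
        = nn ((T τ y + ∫ s in (0:ℝ)..τ, T s (B (F y))) + E) := by
          rw [hsplit, add_assoc]
      _ ≤ nn (T τ y + ∫ s in (0:ℝ)..τ, T s (B (F y))) + nn E := hnn_add _ _
      _ ≤ (1 - ξ * τ + r τ) * nn y + c * Real.exp (ν * τ) * τ * nn y := by
          have := hΔ τ hτ hττ₀ y
          linarith [hEnn]
      _ = q * nn y := by rw [hq]; ring
  intro x hx
  have hnnk : ∀ k : ℕ, nn (x k) ≤ q ^ k * nn (x 0) := by
    intro k
    induction k with
    | zero => simp
    | succ k ih =>
        rw [hx k]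
        calc nn (T τ (x k) + ∫ s in (0:ℝ)..τ, T s (B (f (F (x k)))))
            ≤ q * nn (x k) := key (x k)
          _ ≤ q * (q ^ k * nn (x 0)) := mul_le_mul_of_nonneg_left ih hq0.le
          _ = q ^ (k + 1) * nn (x 0) := by ring
  intro k
  calc ‖x k‖ ≤ nn (x k) := (hnn_equiv (x k)).1
    _ ≤ q ^ k * nn (x 0) := hnnk k
    _ ≤ q ^ k * (N * ‖x 0‖) := by
        have := (hnn_equiv (x 0)).2
        have hqk : (0:ℝ) ≤ q ^ k := by positivity
        nlinarith
    _ = N * q ^ k * ‖x 0‖ := by ring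
end

section
/- (Dissipation inequality along mild solutions, eq. (13) of Proposition 2.) Let T_BF be a strongly continuous semigroup on H with ‖T_BF(t)‖ ≤ N e^{−ξ t} for all t ≥ 0 (N ≥ 1, ξ > 0). Let B : U → H, F : H → U be bounded linear operators and let f : U → U satisfy the sector condition ‖f(Fx) − Fx‖ ≤ θ_f ‖x‖ for all x ∈ H with 0 < θ_f N ‖B‖ < ξ, and let ζ ∈ (θ_f N ‖B‖, ξ). Let V(x) = sup_{t ≥ 0} ‖e^{ζ t} T_BF(t) x‖. Let d : [0,∞) → H be continuous and let x : [0,∞) → H be continuous and satisfy x(t) = T_BF(t) x(0) + ∫₀^t T_BF(t − s) [B(f(F x(s)) − F x(s)) + d(s)] ds for all t ≥ 0. Then limsup_{h → 0⁺} (V(x(h)) − V(x(0)))/h ≤ −(ζ − θ_f N ‖B‖) V(x(0)) + N ‖d(0)‖. -/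
set_option maxHeartbeats 1000000 in
/-- dissipation inequality, eq. (13) of Proposition 2: along any mild
solution `x(t) = T_BF(t)x(0) + ∫₀^t T_BF(t−s)[B(f(Fx(s)) − Fx(s)) + d(s)] ds` of the
disturbed closed loop, the ISS Lyapunov function `V(x) = sup_{t≥0} ‖e^{ζt}T_BF(t)x‖`
satisfies `limsup_{h→0⁺} (V(x(h)) − V(x(0)))/h ≤ −(ζ − θ_f N ‖B‖) V(x(0)) + N ‖d(0)‖`. -/
theorem stmt9
    {H : Type*} [NormedAddCommGroup H] [InnerProductSpace ℝ H] [CompleteSpace H]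
    {U : Type*} [NormedAddCommGroup U] [InnerProductSpace ℝ U] [CompleteSpace U]
    (T : ℝ → H →L[ℝ] H) (N ξ : ℝ) (hN : 1 ≤ N) (hξ : 0 < ξ)
    (hT0 : T 0 = ContinuousLinearMap.id ℝ H)
    (hTadd : ∀ s t : ℝ, 0 ≤ s → 0 ≤ t → T (t + s) = (T t).comp (T s))
    (hTcont : ∀ y : H, ContinuousOn (fun t => T t y) (Set.Ici 0))
    (hTnorm : ∀ t : ℝ, 0 ≤ t → ‖T t‖ ≤ N * Real.exp (-ξ * t))
    (B : U →L[ℝ] H) (F : H →L[ℝ] U) (f : U → U) (θf : ℝ) (hθf : 0 < θf)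
    (hsector : ∀ y : H, ‖f (F y) - F y‖ ≤ θf * ‖y‖)
    (hθsmall : θf * N * ‖B‖ < ξ)
    (ζ : ℝ) (hζ1 : θf * N * ‖B‖ < ζ) (hζ2 : ζ < ξ)
    (V : H → ℝ)
    (hV : ∀ y, V y = sSup ((fun t => ‖Real.exp (ζ * t) • T t y‖) '' Set.Ici 0))
    (d : ℝ → H) (hd : ContinuousOn d (Set.Ici 0))
    (x : ℝ → H) (hx : ContinuousOn x (Set.Ici 0))
    (hmild : ∀ t : ℝ, 0 ≤ t →
      x t = T t (x 0) +
        ∫ s in (0:ℝ)..t, T (t - s) (B (f (F (x s)) - F (x s)) + d s)) :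
    Filter.limsup (fun h : ℝ => (((V (x h) - V (x 0)) / h : ℝ) : EReal))
        (nhdsWithin 0 (Set.Ioi 0)) ≤
      ((-(ζ - θf * N * ‖B‖) * V (x 0) + N * ‖d 0‖ : ℝ) : EReal) := by
  have hN0 : (0:ℝ) < N := lt_of_lt_of_le one_pos hN
  have hζpos : 0 < ζ := lt_of_le_of_lt (by positivity) hζ1
  have helt : ∀ (y : H) (t : ℝ), 0 ≤ t →
      ‖Real.exp (ζ * t) • T t y‖ ≤ N * ‖y‖ := by
    intro y t ht
    rw [norm_smul, Real.norm_eq_abs, abs_of_pos (Real.exp_pos _)]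
    have h1 : ‖T t y‖ ≤ N * Real.exp (-ξ * t) * ‖y‖ := by
      calc ‖T t y‖ ≤ ‖T t‖ * ‖y‖ := (T t).le_opNorm y
        _ ≤ N * Real.exp (-ξ * t) * ‖y‖ :=
            mul_le_mul_of_nonneg_right (hTnorm t ht) (norm_nonneg y)
    have h2 : Real.exp (ζ * t) * (N * Real.exp (-ξ * t) * ‖y‖)
        = N * (Real.exp ((ζ - ξ) * t) * ‖y‖) := by
      rw [show (ζ - ξ) * t = ζ * t + -ξ * t by ring, Real.exp_add]; ring
    have h3 : Real.exp ((ζ - ξ) * t) ≤ 1 := Real.exp_le_one_iff.mpr (by nlinarith)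
    calc Real.exp (ζ * t) * ‖T t y‖
        ≤ Real.exp (ζ * t) * (N * Real.exp (-ξ * t) * ‖y‖) :=
          mul_le_mul_of_nonneg_left h1 (Real.exp_pos _).le
      _ = N * (Real.exp ((ζ - ξ) * t) * ‖y‖) := h2
      _ ≤ N * (1 * ‖y‖) := by
          refine mul_le_mul_of_nonneg_left ?_ hN0.le
          exact mul_le_mul_of_nonneg_right h3 (norm_nonneg y)
      _ = N * ‖y‖ := by ring
  have hbdd : ∀ y : H, BddAbove ((fun t => ‖Real.exp (ζ * t) • T t y‖) '' Set.Ici 0) := by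
    intro y
    refine ⟨N * ‖y‖, ?_⟩
    rintro a ⟨t, ht, rfl⟩
    exact helt y t ht
  have hVle : ∀ y : H, V y ≤ N * ‖y‖ := by
    intro y
    rw [hV]
    apply Real.sSup_le
    · rintro a ⟨t, ht, rfl⟩; exact helt y t ht
    · positivity
  have hmem : ∀ (y : H) (t : ℝ), 0 ≤ t →
      ‖Real.exp (ζ * t) • T t y‖ ≤ V y := by
    intro y t ht
    rw [hV]
    exact le_csSup (hbdd y) ⟨t, ht, rfl⟩
  have hnormle : ∀ y : H, ‖y‖ ≤ V y := by
    intro y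
    have := hmem y 0 le_rfl
    simpa [hT0] using this
  have hV0 : ∀ y : H, 0 ≤ V y := fun y => le_trans (norm_nonneg y) (hnormle y)
  have hVadd : ∀ y z : H, V (y + z) ≤ V y + V z := by
    intro y z
    rw [hV]
    apply Real.sSup_le
    · rintro a ⟨t, ht, rfl⟩
      dsimp only
      have heq : Real.exp (ζ * t) • T t (y + z)
          = Real.exp (ζ * t) • T t y + Real.exp (ζ * t) • T t z := by
        rw [map_add, smul_add]
      rw [heq]
      calc ‖Real.exp (ζ * t) • T t y + Real.exp (ζ * t) • T t z‖
          ≤ ‖Real.exp (ζ * t) • T t y‖ + ‖Real.exp (ζ * t) • T t z‖ := norm_add_le _ _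
        _ ≤ V y + V z := add_le_add (hmem y t ht) (hmem z t ht)
    · linarith [hV0 y, hV0 z]
  have hVT : ∀ (y : H) (h : ℝ), 0 ≤ h → V (T h y) ≤ Real.exp (-ζ * h) * V y := by
    intro y h hh
    rw [hV]
    apply Real.sSup_le
    · rintro a ⟨t, ht, rfl⟩
      dsimp only
      simp only [Set.mem_Ici] at ht
      have hcomp : T t (T h y) = T (t + h) y := by
        rw [hTadd h t hh ht]; rfl
      rw [hcomp]
      have heq : ‖Real.exp (ζ * t) • T (t + h) y‖
          = Real.exp (-ζ * h) * ‖Real.exp (ζ * (t + h)) • T (t + h) y‖ := by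
        rw [norm_smul, norm_smul, Real.norm_eq_abs, Real.norm_eq_abs,
          abs_of_pos (Real.exp_pos _), abs_of_pos (Real.exp_pos _), ← mul_assoc,
          ← Real.exp_add]
        ring_nf
      rw [heq]
      exact mul_le_mul_of_nonneg_left (hmem y (t + h) (by linarith)) (Real.exp_pos _).le
    · exact mul_nonneg (Real.exp_pos _).le (hV0 y)
  -- the integral bound
  have hVI : ∀ h : ℝ, 0 < h → ∀ M : ℝ, 0 ≤ M →
      (∀ s ∈ Set.Ioc (0:ℝ) h, ‖B (f (F (x s)) - F (x s)) + d s‖ ≤ M) →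
      V (∫ s in (0:ℝ)..h, T (h - s) (B (f (F (x s)) - F (x s)) + d s)) ≤ N * M * h := by
    intro h hh M hM hMb
    have hNMh : (0:ℝ) ≤ N * M * h := mul_nonneg (mul_nonneg hN0.le hM) hh.le
    set ψ : ℝ → H := fun s => T (h - s) (B (f (F (x s)) - F (x s)) + d s) with hψ
    by_cases hint : IntervalIntegrable ψ MeasureTheory.volume 0 h
    · rw [hV]
      apply Real.sSup_le
      · rintro a ⟨t, ht, rfl⟩
        dsimp only
        simp only [Set.mem_Ici] at ht
        have hcomm := (T t).intervalIntegral_comp_comm hint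
        rw [norm_smul, Real.norm_eq_abs, abs_of_pos (Real.exp_pos _), ← hcomm]
        have hbound : ∀ s ∈ Set.uIoc (0:ℝ) h, ‖T t (ψ s)‖ ≤ N * Real.exp (-ξ * t) * M := by
          intro s hs
          rw [Set.uIoc_of_le hh.le] at hs
          have hs1 : 0 < s := hs.1
          have hs2 : s ≤ h := hs.2
          have hcomp : T t (ψ s) = T (t + (h - s)) (B (f (F (x s)) - F (x s)) + d s) := by
            rw [hψ, hTadd (h - s) t (by linarith) ht]; rfl
          rw [hcomp]
          set w : H := B (f (F (x s)) - F (x s)) + d s with hw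
          have h1 : ‖T (t + (h - s)) w‖ ≤ N * (Real.exp (-ξ * (t + (h - s))) * ‖w‖) := by
            calc ‖T (t + (h - s)) w‖ ≤ ‖T (t + (h - s))‖ * ‖w‖ := (T _).le_opNorm _
              _ ≤ N * Real.exp (-ξ * (t + (h - s))) * ‖w‖ :=
                  mul_le_mul_of_nonneg_right (hTnorm _ (by linarith)) (norm_nonneg w)
              _ = N * (Real.exp (-ξ * (t + (h - s))) * ‖w‖) := by ring
          have h2 : Real.exp (-ξ * (t + (h - s))) ≤ Real.exp (-ξ * t) :=
            Real.exp_le_exp.mpr (by nlinarith)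
          have h3 : ‖w‖ ≤ M := hMb s hs
          have step : Real.exp (-ξ * (t + (h - s))) * ‖w‖ ≤ Real.exp (-ξ * t) * M := by
            nlinarith [norm_nonneg w, Real.exp_pos (-ξ * t),
              Real.exp_pos (-ξ * (t + (h - s)))]
          calc ‖T (t + (h - s)) w‖ ≤ N * (Real.exp (-ξ * (t + (h - s))) * ‖w‖) := h1
            _ ≤ N * (Real.exp (-ξ * t) * M) := mul_le_mul_of_nonneg_left step hN0.le
            _ = N * Real.exp (-ξ * t) * M := by ring
        have h4 := intervalIntegral.norm_integral_le_of_norm_le_const hbound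
        rw [show |h - (0:ℝ)| = h by rw [sub_zero, abs_of_pos hh]] at h4
        have h6 : Real.exp (ζ * t) * (N * Real.exp (-ξ * t) * M * h)
            = Real.exp ((ζ - ξ) * t) * (N * M * h) := by
          rw [show (ζ - ξ) * t = ζ * t + -ξ * t by ring, Real.exp_add]; ring
        have h7 : Real.exp ((ζ - ξ) * t) ≤ 1 := Real.exp_le_one_iff.mpr (by nlinarith)
        calc Real.exp (ζ * t) * ‖∫ s in (0:ℝ)..h, T t (ψ s)‖
            ≤ Real.exp (ζ * t) * (N * Real.exp (-ξ * t) * M * h) :=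
              mul_le_mul_of_nonneg_left h4 (Real.exp_pos _).le
          _ = Real.exp ((ζ - ξ) * t) * (N * M * h) := h6
          _ ≤ 1 * (N * M * h) := mul_le_mul_of_nonneg_right h7 hNMh
          _ = N * M * h := one_mul _
      · exact hNMh
    · rw [intervalIntegral.integral_undef hint]
      have h0 := hVle 0
      simp only [norm_zero, mul_zero] at h0
      linarith
  -- the key eventual bound
  have key : ∀ ε : ℝ, 0 < ε → ∀ᶠ h in nhdsWithin (0:ℝ) (Set.Ioi 0),
      (V (x h) - V (x 0)) / h ≤ -(ζ - θf * N * ‖B‖) * V (x 0) + N * ‖d 0‖ + ε := by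
    intro ε hε
    set εx : ℝ := ε / (2 * N * (θf * ‖B‖ + 1)) with hεxdef
    set εq : ℝ := ε / (2 * (V (x 0) + 1)) with hεqdef
    have hεx : 0 < εx := by
      apply div_pos hε; positivity
    have hεq : 0 < εq := by
      apply div_pos hε
      nlinarith [hV0 (x 0)]
    have hxc : Filter.Tendsto x (nhdsWithin 0 (Set.Ici 0)) (nhds (x 0)) :=
      hx 0 Set.self_mem_Ici
    have hdc : Filter.Tendsto d (nhdsWithin 0 (Set.Ici 0)) (nhds (d 0)) :=
      hd 0 Set.self_mem_Ici
    have hx2 : ∀ᶠ s in nhdsWithin (0:ℝ) (Set.Ici 0), ‖x s - x 0‖ < εx := by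
      filter_upwards [hxc (Metric.ball_mem_nhds (x 0) hεx)] with s hs
      simpa [Metric.mem_ball, dist_eq_norm] using hs
    have hd2 : ∀ᶠ s in nhdsWithin (0:ℝ) (Set.Ici 0), ‖d s - d 0‖ < εx := by
      filter_upwards [hdc (Metric.ball_mem_nhds (d 0) hεx)] with s hs
      simpa [Metric.mem_ball, dist_eq_norm] using hs
    obtain ⟨δ1, hδ1, hb1⟩ := Metric.mem_nhdsWithin_iff.mp hx2
    obtain ⟨δ2, hδ2, hb2⟩ := Metric.mem_nhdsWithin_iff.mp hd2
    have hδ : 0 < min δ1 δ2 := lt_min hδ1 hδ2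
    have hq : ∀ᶠ h in nhdsWithin (0:ℝ) (Set.Ioi 0),
        (Real.exp (-ζ * h) - 1) / h < -ζ + εq := by
      have hder : HasDerivAt (fun u : ℝ => Real.exp (-ζ * u)) (-ζ) 0 := by
        have h1 : HasDerivAt (fun u : ℝ => -ζ * u) (-ζ) 0 := by
          simpa using (hasDerivAt_id (0:ℝ)).const_mul (-ζ)
        have h2 := (Real.hasDerivAt_exp (-ζ * 0)).comp 0 h1
        simp only [Function.comp_def] at h2
        simpa using h2
      have hslope := hasDerivAt_iff_tendsto_slope.mp hder
      have hmono : nhdsWithin (0:ℝ) (Set.Ioi 0) ≤ nhdsWithin (0:ℝ) {(0:ℝ)}ᶜ :=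
        nhdsWithin_mono _ (fun y hy => ne_of_gt hy)
      have h2 := (hslope.mono_left hmono).eventually_lt_const
        (show -ζ < -ζ + εq by linarith)
      filter_upwards [h2] with h hh
      have hsl : slope (fun u : ℝ => Real.exp (-ζ * u)) 0 h
          = (Real.exp (-ζ * h) - 1) / h := by
        simp [slope_def_field]
      linarith [hsl ▸ hh]
    have hIoo : Set.Ioo (0:ℝ) (min δ1 δ2) ∈ nhdsWithin (0:ℝ) (Set.Ioi 0) :=
      Ioo_mem_nhdsGT_of_mem ⟨le_rfl, hδ⟩
    filter_upwards [hq, hIoo] with h hqh hhδ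
    have hh : 0 < h := hhδ.1
    have hhδ' : h < min δ1 δ2 := hhδ.2
    set M : ℝ := θf * ‖B‖ * (‖x 0‖ + εx) + (‖d 0‖ + εx) with hMdef
    have hM0 : 0 ≤ M := by
      rw [hMdef]
      have h1 : 0 ≤ θf * ‖B‖ * (‖x 0‖ + εx) :=
        mul_nonneg (mul_nonneg hθf.le (norm_nonneg B))
          (by linarith [norm_nonneg (x 0)])
      have h2 := norm_nonneg (d 0)
      linarith
    have hMb : ∀ s ∈ Set.Ioc (0:ℝ) h, ‖B (f (F (x s)) - F (x s)) + d s‖ ≤ M := by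
      intro s hs
      have hs0 : (0:ℝ) ≤ s := hs.1.le
      have hsδ : |s - 0| < min δ1 δ2 := by
        rw [sub_zero, abs_of_nonneg hs0]; linarith [hs.2]
      have hx3 : ‖x s - x 0‖ < εx := hb1 ⟨by
        rw [Metric.mem_ball, Real.dist_eq]
        exact lt_of_lt_of_le hsδ (min_le_left _ _), hs0⟩
      have hd3 : ‖d s - d 0‖ < εx := hb2 ⟨by
        rw [Metric.mem_ball, Real.dist_eq]
        exact lt_of_lt_of_le hsδ (min_le_right _ _), hs0⟩
      have hx4 : ‖x s‖ ≤ ‖x 0‖ + εx := by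
        have := norm_sub_norm_le (x s) (x 0); linarith
      have hd4 : ‖d s‖ ≤ ‖d 0‖ + εx := by
        have := norm_sub_norm_le (d s) (d 0); linarith
      have h1 : ‖B (f (F (x s)) - F (x s))‖ ≤ ‖B‖ * (θf * ‖x s‖) := by
        calc ‖B (f (F (x s)) - F (x s))‖ ≤ ‖B‖ * ‖f (F (x s)) - F (x s)‖ := B.le_opNorm _
          _ ≤ ‖B‖ * (θf * ‖x s‖) :=
              mul_le_mul_of_nonneg_left (hsector (x s)) (norm_nonneg B)
      have h2 : θf * ‖B‖ * ‖x s‖ ≤ θf * ‖B‖ * (‖x 0‖ + εx) :=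
        mul_le_mul_of_nonneg_left hx4 (mul_nonneg hθf.le (norm_nonneg B))
      calc ‖B (f (F (x s)) - F (x s)) + d s‖
          ≤ ‖B (f (F (x s)) - F (x s))‖ + ‖d s‖ := norm_add_le _ _
        _ ≤ ‖B‖ * (θf * ‖x s‖) + ‖d s‖ := by linarith
        _ ≤ M := by rw [hMdef]; nlinarith
    have hVIh := hVI h hh M hM0 hMb
    have step1 : V (x h) ≤ Real.exp (-ζ * h) * V (x 0) + N * M * h := by
      rw [hmild h hh.le]
      exact le_trans (hVadd _ _) (add_le_add (hVT (x 0) h hh.le) hVIh)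
    have step2 : (V (x h) - V (x 0)) / h
        ≤ (Real.exp (-ζ * h) - 1) / h * V (x 0) + N * M := by
      rw [div_le_iff₀ hh]
      have hexp : ((Real.exp (-ζ * h) - 1) / h * V (x 0) + N * M) * h
          = (Real.exp (-ζ * h) - 1) * V (x 0) + N * M * h := by
        field_simp
      rw [hexp]
      linarith
    have step3 : (Real.exp (-ζ * h) - 1) / h * V (x 0) ≤ (-ζ + εq) * V (x 0) :=
      mul_le_mul_of_nonneg_right hqh.le (hV0 _)
    have haux1 : εq * V (x 0) ≤ ε / 2 := by
      rw [hεqdef, div_mul_eq_mul_div,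
        div_le_div_iff₀ (by nlinarith [hV0 (x 0)]) two_pos]
      nlinarith [hV0 (x 0)]
    have haux2 : N * (θf * ‖B‖ + 1) * εx = ε / 2 := by
      have hBne : θf * ‖B‖ + 1 ≠ 0 := by positivity
      have hNne : N ≠ 0 := ne_of_gt hN0
      rw [hεxdef]
      field_simp
    have hxV := hnormle (x 0)
    have hc : (0:ℝ) ≤ N * (θf * ‖B‖) := by positivity
    have hNM : N * M = N * (θf * ‖B‖) * ‖x 0‖ + N * (θf * ‖B‖ + 1) * εx + N * ‖d 0‖ := by
      rw [hMdef]; ring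
    have h5 : N * (θf * ‖B‖) * ‖x 0‖ ≤ N * (θf * ‖B‖) * V (x 0) :=
      mul_le_mul_of_nonneg_left hxV hc
    calc (V (x h) - V (x 0)) / h
        ≤ (-ζ + εq) * V (x 0) + N * M := by linarith
      _ ≤ -(ζ - θf * N * ‖B‖) * V (x 0) + N * ‖d 0‖ + ε := by
          rw [hNM]; nlinarith [hV0 (x 0)]
  -- conclude via limsup
  have main : ∀ ε : ℝ, 0 < ε →
      Filter.limsup (fun h : ℝ => (((V (x h) - V (x 0)) / h : ℝ) : EReal))
        (nhdsWithin 0 (Set.Ioi 0))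
      ≤ ((-(ζ - θf * N * ‖B‖) * V (x 0) + N * ‖d 0‖ + ε : ℝ) : EReal) := by
    intro ε hε
    refine Filter.limsup_le_of_le (by isBoundedDefault) ?_
    filter_upwards [key ε hε] with h hh
    exact_mod_cast hh
  by_contra hcon
  push_neg at hcon
  obtain ⟨r, hr1, hr2⟩ := EReal.lt_iff_exists_real_btwn.mp hcon
  have hr1' : -(ζ - θf * N * ‖B‖) * V (x 0) + N * ‖d 0‖ < r := by exact_mod_cast hr1
  have hε : 0 < r - (-(ζ - θf * N * ‖B‖) * V (x 0) + N * ‖d 0‖) := by linarith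
  have hm := main _ hε
  rw [show -(ζ - θf * N * ‖B‖) * V (x 0) + N * ‖d 0‖ +
      (r - (-(ζ - θf * N * ‖B‖) * V (x 0) + N * ‖d 0‖)) = r by ring] at hm
  exact absurd (lt_of_le_of_lt hm hr2) (lt_irrefl _)
end

section
/- (Integrated dissipation inequality, eq. (17) in the proof of Proposition 2.) Let T_BF be a strongly continuous semigroup on H with ‖T_BF(t)‖ ≤ N e^{−ξ t} for all t ≥ 0 (N ≥ 1, ξ > 0). Let B : U → H, F : H → U be bounded linear operators, let f : U → U satisfy the sector condition ‖f(Fx) − Fx‖ ≤ θ_f ‖x‖ for all x ∈ H with 0 < θ_f N ‖B‖ < ξ, let ζ ∈ (θ_f N ‖B‖, ξ) and set ℓ = ζ − θ_f N ‖B‖ > 0. Let V(x) = sup_{t ≥ 0} ‖e^{ζ t} T_BF(t) x‖. Let d : [0,∞) → H be continuous and let x : [0,∞) → H be continuous and satisfy x(t) = T_BF(t) x(0) + ∫₀^t T_BF(t − s) [B(f(F x(s)) − F x(s)) + d(s)] ds for all t ≥ 0. Then for all t ≥ 0, V(x(t)) ≤ e^{−ℓ t} V(x(0)) + N ∫₀^t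 e^{−ℓ (t − s)} ‖d(s)‖ ds. -/
open MeasureTheory intervalIntegral Set

/-- Integral form of Grönwall's inequality. -/
lemma gronwall_integral_form {u g : ℝ → ℝ} {k C tf : ℝ} (hk : 0 ≤ k) (htf : 0 ≤ tf)
    (hu : ContinuousOn u (Set.Ici 0)) (hg : ContinuousOn g (Set.Ici 0))
    (hle : ∀ t, 0 ≤ t → t ≤ tf → u t ≤ C + ∫ s in (0:ℝ)..t, (k * u s + g s)) :
    u tf ≤ Real.exp (k * tf) * C + ∫ s in (0:ℝ)..tf, Real.exp (k * (tf - s)) * g s := by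
  -- continuity of φ := k*u + g on Ici 0
  have hφ : ContinuousOn (fun s => k * u s + g s) (Set.Ici 0) :=
    ((continuousOn_const.mul hu).add hg)
  have hψg : ContinuousOn (fun s => Real.exp (-k * s) * g s) (Set.Ici 0) :=
    ((Real.continuous_exp.comp (continuous_const.mul continuous_id)).continuousOn.mul hg)
  -- integrability on subintervals of [0, tf]
  have hφint : ∀ t ∈ Set.Icc (0:ℝ) tf, IntervalIntegrable (fun s => k * u s + g s) volume 0 t := by
    intro t ht
    have : Set.uIcc (0:ℝ) t ⊆ Set.Ici 0 := by
      rw [Set.uIcc_of_le ht.1]; exact fun s hs => hs.1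
    exact (hφ.mono this).intervalIntegrable
  have hψint : ∀ t ∈ Set.Icc (0:ℝ) tf,
      IntervalIntegrable (fun s => Real.exp (-k * s) * g s) volume 0 t := by
    intro t ht
    have : Set.uIcc (0:ℝ) t ⊆ Set.Ici 0 := by
      rw [Set.uIcc_of_le ht.1]; exact fun s hs => hs.1
    exact (hψg.mono this).intervalIntegrable
  set w : ℝ → ℝ := fun t => C + ∫ s in (0:ℝ)..t, (k * u s + g s) with hw
  have huw : ∀ t, 0 ≤ t → t ≤ tf → u t ≤ w t := fun t h1 h2 => hle t h1 h2
  set ψ : ℝ → ℝ := fun t => Real.exp (-k * t) * w t - ∫ s in (0:ℝ)..t, Real.exp (-k * s) * g s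
    with hψ
  have hwcont : ContinuousOn w (Set.Icc 0 tf) := by
    apply continuousOn_const.add
    have : IntegrableOn (fun s => k * u s + g s) (Set.uIcc 0 tf) volume := by
      rw [Set.uIcc_of_le htf]
      exact (hφ.mono (fun s hs => hs.1)).integrableOn_compact isCompact_Icc
    exact continuousOn_primitive_interval this |>.mono (by rw [Set.uIcc_of_le htf])
  have hψcont : ContinuousOn ψ (Set.Icc 0 tf) := by
    apply ContinuousOn.sub
    · exact ((Real.continuous_exp.comp (continuous_const.mul continuous_id)).continuousOn.mul
        hwcont)
    · have : IntegrableOn (fun s => Real.exp (-k * s) * g s) (Set.uIcc 0 tf) volume := by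
        rw [Set.uIcc_of_le htf]
        exact (hψg.mono (fun s hs => hs.1)).integrableOn_compact isCompact_Icc
      exact continuousOn_primitive_interval this |>.mono (by rw [Set.uIcc_of_le htf])
  -- ψ antitone on [0, tf]
  have hanti : AntitoneOn ψ (Set.Icc 0 tf) := by
    apply antitoneOn_of_deriv_nonpos (convex_Icc 0 tf) hψcont
    · -- differentiability on interior
      intro y hy
      rw [interior_Icc] at hy
      have hyIcc : y ∈ Set.Icc (0:ℝ) tf := ⟨hy.1.le, hy.2.le⟩
      have hcy : ContinuousAt (fun s => k * u s + g s) y :=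
        hφ.continuousAt (Ici_mem_nhds hy.1)
      have hcy' : ContinuousAt (fun s => Real.exp (-k * s) * g s) y :=
        hψg.continuousAt (Ici_mem_nhds hy.1)
      have hW : HasDerivAt w (k * u y + g y) y := by
        apply HasDerivAt.const_add
        exact integral_hasDerivAt_right (hφint y hyIcc)
          (ContinuousOn.stronglyMeasurableAtFilter isOpen_Ioi
            (hφ.mono Set.Ioi_subset_Ici_self) y hy.1) hcy
      have hG : HasDerivAt (fun t => ∫ s in (0:ℝ)..t, Real.exp (-k * s) * g s)
          (Real.exp (-k * y) * g y) y :=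
        integral_hasDerivAt_right (hψint y hyIcc) (ContinuousOn.stronglyMeasurableAtFilter isOpen_Ioi
          (hψg.mono Set.Ioi_subset_Ici_self) y hy.1) hcy'
      have hE : HasDerivAt (fun t => Real.exp (-k * t)) (-k * Real.exp (-k * y)) y := by
        have := (hasDerivAt_id y).const_mul (-k) |>.exp
        simpa [mul_comm] using this
      exact ((hE.mul hW).sub hG).differentiableAt.differentiableWithinAt
    · intro y hy
      rw [interior_Icc] at hy
      have hyIcc : y ∈ Set.Icc (0:ℝ) tf := ⟨hy.1.le, hy.2.le⟩
      have hcy : ContinuousAt (fun s => k * u s + g s) y :=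
        hφ.continuousAt (Ici_mem_nhds hy.1)
      have hcy' : ContinuousAt (fun s => Real.exp (-k * s) * g s) y :=
        hψg.continuousAt (Ici_mem_nhds hy.1)
      have hW : HasDerivAt w (k * u y + g y) y := by
        apply HasDerivAt.const_add
        exact integral_hasDerivAt_right (hφint y hyIcc)
          (ContinuousOn.stronglyMeasurableAtFilter isOpen_Ioi
            (hφ.mono Set.Ioi_subset_Ici_self) y hy.1) hcy
      have hG : HasDerivAt (fun t => ∫ s in (0:ℝ)..t, Real.exp (-k * s) * g s)
          (Real.exp (-k * y) * g y) y :=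
        integral_hasDerivAt_right (hψint y hyIcc) (ContinuousOn.stronglyMeasurableAtFilter isOpen_Ioi
          (hψg.mono Set.Ioi_subset_Ici_self) y hy.1) hcy'
      have hE : HasDerivAt (fun t => Real.exp (-k * t)) (-k * Real.exp (-k * y)) y := by
        have := (hasDerivAt_id y).const_mul (-k) |>.exp
        simpa [mul_comm] using this
      have hΨ : HasDerivAt ψ
          ((-k * Real.exp (-k * y)) * w y + Real.exp (-k * y) * (k * u y + g y)
            - Real.exp (-k * y) * g y) y := (hE.mul hW).sub hG
      rw [hΨ.deriv]
      have huw' : u y ≤ w y := huw y hy.1.le hy.2.le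
      have hexp : (0:ℝ) < Real.exp (-k * y) := Real.exp_pos _
      nlinarith [mul_le_mul_of_nonneg_left huw' (mul_nonneg hk hexp.le)]
  -- conclude: ψ tf ≤ ψ 0
  have hψ0 : ψ 0 = C := by simp [hψ, hw]
  have h1 : ψ tf ≤ C := by
    rw [← hψ0]
    exact hanti (Set.left_mem_Icc.2 htf) (Set.right_mem_Icc.2 htf) htf
  have h2 : Real.exp (-k * tf) * w tf ≤ C + ∫ s in (0:ℝ)..tf, Real.exp (-k * s) * g s := by
    have := h1
    simp only [hψ] at this
    linarith
  have h3 : w tf ≤ Real.exp (k * tf) * C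
      + Real.exp (k * tf) * ∫ s in (0:ℝ)..tf, Real.exp (-k * s) * g s := by
    have hpos : (0:ℝ) < Real.exp (-k * tf) := Real.exp_pos _
    have := mul_le_mul_of_nonneg_left h2 (Real.exp_pos (k * tf)).le
    have hinv : Real.exp (k * tf) * Real.exp (-k * tf) = 1 := by
      rw [← Real.exp_add]; ring_nf; exact Real.exp_zero
    calc w tf = (Real.exp (k * tf) * Real.exp (-k * tf)) * w tf := by rw [hinv]; ring
    _ = Real.exp (k * tf) * (Real.exp (-k * tf) * w tf) := by ring
    _ ≤ Real.exp (k * tf) * (C + ∫ s in (0:ℝ)..tf, Real.exp (-k * s) * g s) := this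
    _ = _ := by ring
  have h4 : Real.exp (k * tf) * (∫ s in (0:ℝ)..tf, Real.exp (-k * s) * g s)
      = ∫ s in (0:ℝ)..tf, Real.exp (k * (tf - s)) * g s := by
    rw [← intervalIntegral.integral_const_mul]
    apply intervalIntegral.integral_congr
    intro s _
    dsimp only
    rw [← mul_assoc, ← Real.exp_add]
    ring_nf
  calc u tf ≤ w tf := huw tf htf le_rfl
  _ ≤ _ := by rw [← h4]; exact h3

/-- integrated dissipation inequality, eq. (17): along any mild
solution of the disturbed closed loop, with `ℓ = ζ − θ_f N ‖B‖ > 0`,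
`V(x(t)) ≤ e^{−ℓ t} V(x(0)) + N ∫₀^t e^{−ℓ(t−s)} ‖d(s)‖ ds` for all `t ≥ 0`. -/
theorem stmt10
    {H : Type*} [NormedAddCommGroup H] [InnerProductSpace ℝ H] [CompleteSpace H]
    {U : Type*} [NormedAddCommGroup U] [InnerProductSpace ℝ U] [CompleteSpace U]
    (T : ℝ → H →L[ℝ] H) (N ξ : ℝ) (hN : 1 ≤ N) (hξ : 0 < ξ)
    (hT0 : T 0 = ContinuousLinearMap.id ℝ H)
    (hTadd : ∀ s t : ℝ, 0 ≤ s → 0 ≤ t → T (t + s) = (T t).comp (T s))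
    (hTcont : ∀ y : H, ContinuousOn (fun t => T t y) (Set.Ici 0))
    (hTnorm : ∀ t : ℝ, 0 ≤ t → ‖T t‖ ≤ N * Real.exp (-ξ * t))
    (B : U →L[ℝ] H) (F : H →L[ℝ] U) (f : U → U) (θf : ℝ) (hθf : 0 < θf)
    (hsector : ∀ y : H, ‖f (F y) - F y‖ ≤ θf * ‖y‖)
    (hθsmall : θf * N * ‖B‖ < ξ)
    (ζ : ℝ) (hζ1 : θf * N * ‖B‖ < ζ) (hζ2 : ζ < ξ)
    (ℓ : ℝ) (hℓ : ℓ = ζ - θf * N * ‖B‖)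
    (V : H → ℝ)
    (hV : ∀ y, V y = sSup ((fun t => ‖Real.exp (ζ * t) • T t y‖) '' Set.Ici 0))
    (d : ℝ → H) (hd : ContinuousOn d (Set.Ici 0))
    (x : ℝ → H) (hx : ContinuousOn x (Set.Ici 0))
    (hmild : ∀ t : ℝ, 0 ≤ t →
      x t = T t (x 0) +
        ∫ s in (0:ℝ)..t, T (t - s) (B (f (F (x s)) - F (x s)) + d s)) :
    ∀ t : ℝ, 0 ≤ t →
      V (x t) ≤ Real.exp (-ℓ * t) * V (x 0) +
        N * ∫ s in (0:ℝ)..t, Real.exp (-ℓ * (t - s)) * ‖d s‖ := by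
  have hN0 : (0:ℝ) < N := lt_of_lt_of_le one_pos hN
  set k : ℝ := θf * N * ‖B‖ with hkdef
  have hk0 : 0 ≤ k := by positivity
  have hζ0 : 0 < ζ := lt_of_le_of_lt (by positivity) hζ1
  -- upper bound on elements of the defining set of V
  have hmemub : ∀ (y : H) (τ : ℝ), 0 ≤ τ → ‖Real.exp (ζ * τ) • T τ y‖ ≤ N * ‖y‖ := by
    intro y τ hτ
    rw [norm_smul, Real.norm_eq_abs, abs_of_pos (Real.exp_pos _)]
    have h1 : ‖T τ y‖ ≤ N * Real.exp (-ξ * τ) * ‖y‖ :=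
      le_trans ((T τ).le_opNorm y) (mul_le_mul_of_nonneg_right (hTnorm τ hτ) (norm_nonneg y))
    have h2 : Real.exp (ζ * τ) * Real.exp (-ξ * τ) ≤ 1 := by
      rw [← Real.exp_add]
      apply Real.exp_le_one_iff.2
      nlinarith
    calc Real.exp (ζ * τ) * ‖T τ y‖ ≤ Real.exp (ζ * τ) * (N * Real.exp (-ξ * τ) * ‖y‖) :=
          mul_le_mul_of_nonneg_left h1 (Real.exp_pos _).le
      _ = (Real.exp (ζ * τ) * Real.exp (-ξ * τ)) * (N * ‖y‖) := by ring
      _ ≤ 1 * (N * ‖y‖) := by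
          apply mul_le_mul_of_nonneg_right h2; positivity
      _ = N * ‖y‖ := one_mul _
  have hne : ∀ y : H, ((fun t => ‖Real.exp (ζ * t) • T t y‖) '' Set.Ici 0).Nonempty :=
    fun y => ⟨_, ⟨0, Set.self_mem_Ici, rfl⟩⟩
  have hbdd : ∀ y : H, BddAbove ((fun t => ‖Real.exp (ζ * t) • T t y‖) '' Set.Ici 0) := by
    intro y
    refine ⟨N * ‖y‖, ?_⟩
    rintro r ⟨τ, hτ, rfl⟩
    exact hmemub y τ hτ
  have hmemle : ∀ (y : H) (τ : ℝ), 0 ≤ τ → ‖Real.exp (ζ * τ) • T τ y‖ ≤ V y := by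
    intro y τ hτ
    rw [hV y]
    exact le_csSup (hbdd y) ⟨τ, hτ, rfl⟩
  have hnormle : ∀ y : H, ‖y‖ ≤ V y := by
    intro y
    have := hmemle y 0 le_rfl
    simpa [hT0, Real.exp_zero] using this
  have hV0 : ∀ y : H, 0 ≤ V y := fun y => le_trans (norm_nonneg y) (hnormle y)
  -- Lipschitz property of V
  have hVsub : ∀ a b : H, V a ≤ V b + N * ‖a - b‖ := by
    intro a b
    rw [hV a]
    apply csSup_le (hne a)
    rintro r ⟨τ, hτ, rfl⟩
    have hab : a = b + (a - b) := by abel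
    calc ‖Real.exp (ζ * τ) • T τ a‖
        = ‖Real.exp (ζ * τ) • T τ b + Real.exp (ζ * τ) • T τ (a - b)‖ := by
          rw [← smul_add, ← map_add]; rw [← hab]
      _ ≤ ‖Real.exp (ζ * τ) • T τ b‖ + ‖Real.exp (ζ * τ) • T τ (a - b)‖ := norm_add_le _ _
      _ ≤ V b + N * ‖a - b‖ := add_le_add (hmemle b τ hτ) (hmemub (a - b) τ hτ)
  have hVabs : ∀ a b : H, |V a - V b| ≤ N * ‖a - b‖ := by
    intro a b
    rw [abs_sub_le_iff]
    constructor
    · linarith [hVsub a b]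
    · have := hVsub b a
      rw [norm_sub_rev] at this
      linarith
  have hVlip : LipschitzWith (Real.toNNReal N) V := by
    apply LipschitzWith.of_dist_le_mul
    intro a b
    rw [Real.dist_eq, dist_eq_norm, Real.coe_toNNReal N hN0.le]
    exact hVabs a b
  have hVx : ContinuousOn (fun s => V (x s)) (Set.Ici 0) :=
    hVlip.continuous.comp_continuousOn hx
  -- the disturbance-plus-nonlinearity term
  set g : ℝ → H := fun s => B (f (F (x s)) - F (x s)) + d s with hgdef
  have hgbound : ∀ s : ℝ, N * ‖g s‖ ≤ k * V (x s) + N * ‖d s‖ := by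
    intro s
    have h1 : ‖g s‖ ≤ ‖B‖ * (θf * ‖x s‖) + ‖d s‖ := by
      apply le_trans (norm_add_le _ _)
      apply add_le_add _ le_rfl
      exact le_trans (B.le_opNorm _) (mul_le_mul_of_nonneg_left (hsector (x s)) (norm_nonneg _))
    have h2 : ‖x s‖ ≤ V (x s) := hnormle (x s)
    have h3 : N * ‖g s‖ ≤ N * (‖B‖ * (θf * ‖x s‖) + ‖d s‖) :=
      mul_le_mul_of_nonneg_left h1 hN0.le
    have h4 : N * (‖B‖ * (θf * ‖x s‖)) = k * ‖x s‖ := by rw [hkdef]; ring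
    nlinarith
  -- continuity of the comparison integrand
  have hRHScont : ∀ t : ℝ, ContinuousOn
      (fun s => Real.exp (-ζ * (t - s)) * (k * V (x s) + N * ‖d s‖)) (Set.Ici 0) := by
    intro t
    apply ContinuousOn.mul
    · exact (Real.continuous_exp.comp ((continuous_const.mul (continuous_const.sub continuous_id)))).continuousOn
    · exact (continuousOn_const.mul hVx).add (continuousOn_const.mul hd.norm)
  -- the key integral inequality obtained by applying V to the mild formula
  have key : ∀ t : ℝ, 0 ≤ t → V (x t) ≤ Real.exp (-ζ * t) * V (x 0) +
      ∫ s in (0:ℝ)..t, Real.exp (-ζ * (t - s)) * (k * V (x s) + N * ‖d s‖) := by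
    intro t ht
    have hsub : Set.uIcc (0:ℝ) t ⊆ Set.Ici 0 := by
      rw [Set.uIcc_of_le ht]; exact fun s hs => hs.1
    have hRHSnn : 0 ≤ ∫ s in (0:ℝ)..t,
        Real.exp (-ζ * (t - s)) * (k * V (x s) + N * ‖d s‖) := by
      apply intervalIntegral.integral_nonneg ht
      intro s hs
      have := hV0 (x s)
      positivity
    rw [hV (x t)]
    apply csSup_le (hne (x t))
    rintro r ⟨τ, hτ, rfl⟩
    have hτ0 : (0:ℝ) ≤ τ := hτ
    dsimp only
    rw [hmild t ht]
    have hsplit : Real.exp (ζ * τ) • T τ (T t (x 0) + ∫ s in (0:ℝ)..t, T (t - s) (g s))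
        = Real.exp (ζ * τ) • T τ (T t (x 0))
          + Real.exp (ζ * τ) • T τ (∫ s in (0:ℝ)..t, T (t - s) (g s)) := by
      rw [map_add, smul_add]
    -- first term
    have h1 : ‖Real.exp (ζ * τ) • T τ (T t (x 0))‖ ≤ Real.exp (-ζ * t) * V (x 0) := by
      have hc : T τ (T t (x 0)) = T (τ + t) (x 0) := by rw [hTadd t τ ht hτ0]; rfl
      rw [hc, norm_smul, Real.norm_eq_abs, abs_of_pos (Real.exp_pos _)]
      have h2 : ‖Real.exp (ζ * (τ + t)) • T (τ + t) (x 0)‖ ≤ V (x 0) :=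
        hmemle (x 0) (τ + t) (by linarith)
      rw [norm_smul, Real.norm_eq_abs, abs_of_pos (Real.exp_pos _)] at h2
      have he : Real.exp (ζ * τ) = Real.exp (-ζ * t) * Real.exp (ζ * (τ + t)) := by
        rw [← Real.exp_add]; ring_nf
      calc Real.exp (ζ * τ) * ‖T (τ + t) (x 0)‖
          = Real.exp (-ζ * t) * (Real.exp (ζ * (τ + t)) * ‖T (τ + t) (x 0)‖) := by
            rw [he]; ring
        _ ≤ Real.exp (-ζ * t) * V (x 0) :=
            mul_le_mul_of_nonneg_left h2 (Real.exp_pos _).le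
    -- second term
    have h2 : ‖Real.exp (ζ * τ) • T τ (∫ s in (0:ℝ)..t, T (t - s) (g s))‖
        ≤ ∫ s in (0:ℝ)..t, Real.exp (-ζ * (t - s)) * (k * V (x s) + N * ‖d s‖) := by
      by_cases hint : IntervalIntegrable (fun s => T (t - s) (g s)) MeasureTheory.volume 0 t
      · have hcomm : T τ (∫ s in (0:ℝ)..t, T (t - s) (g s))
            = ∫ s in (0:ℝ)..t, T τ (T (t - s) (g s)) :=
          ((T τ).intervalIntegral_comp_comm hint).symm
        rw [hcomm, norm_smul, Real.norm_eq_abs, abs_of_pos (Real.exp_pos _)]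
        have hintc : IntervalIntegrable (fun s => T τ (T (t - s) (g s)))
            MeasureTheory.volume 0 t :=
          ⟨(T τ).integrable_comp hint.1, (T τ).integrable_comp hint.2⟩
        have hint1 : IntervalIntegrable
            (fun s => Real.exp (ζ * τ) * ‖T τ (T (t - s) (g s))‖)
            MeasureTheory.volume 0 t := hintc.norm.const_mul _
        have hint2 : IntervalIntegrable
            (fun s => Real.exp (-ζ * (t - s)) * (k * V (x s) + N * ‖d s‖))
            MeasureTheory.volume 0 t := ((hRHScont t).mono hsub).intervalIntegrable
        have hpt : ∀ s ∈ Set.Icc (0:ℝ) t,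
            Real.exp (ζ * τ) * ‖T τ (T (t - s) (g s))‖
              ≤ Real.exp (-ζ * (t - s)) * (k * V (x s) + N * ‖d s‖) := by
          intro s hs
          have hts : 0 ≤ t - s := by linarith [hs.2]
          have hc : T τ (T (t - s) (g s)) = T (τ + (t - s)) (g s) := by
            rw [hTadd (t - s) τ hts hτ0]; rfl
          rw [hc]
          have hb : ‖T (τ + (t - s)) (g s)‖ ≤ N * Real.exp (-ξ * (τ + (t - s))) * ‖g s‖ :=
            le_trans ((T _).le_opNorm _)
              (mul_le_mul_of_nonneg_right (hTnorm _ (by linarith)) (norm_nonneg _))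
          have hb2 : Real.exp (-ξ * (τ + (t - s))) ≤ Real.exp (-ζ * (τ + (t - s))) := by
            apply Real.exp_le_exp.2
            nlinarith
          have he : Real.exp (ζ * τ) * Real.exp (-ζ * (τ + (t - s)))
              = Real.exp (-ζ * (t - s)) := by rw [← Real.exp_add]; ring_nf
          calc Real.exp (ζ * τ) * ‖T (τ + (t - s)) (g s)‖
              ≤ Real.exp (ζ * τ) * (N * Real.exp (-ζ * (τ + (t - s))) * ‖g s‖) := by
                apply mul_le_mul_of_nonneg_left _ (Real.exp_pos _).le
                calc ‖T (τ + (t - s)) (g s)‖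
                    ≤ N * Real.exp (-ξ * (τ + (t - s))) * ‖g s‖ := hb
                  _ ≤ N * Real.exp (-ζ * (τ + (t - s))) * ‖g s‖ := by
                      apply mul_le_mul_of_nonneg_right _ (norm_nonneg _)
                      exact mul_le_mul_of_nonneg_left hb2 hN0.le
            _ = (Real.exp (ζ * τ) * Real.exp (-ζ * (τ + (t - s)))) * (N * ‖g s‖) := by ring
            _ = Real.exp (-ζ * (t - s)) * (N * ‖g s‖) := by rw [he]
            _ ≤ Real.exp (-ζ * (t - s)) * (k * V (x s) + N * ‖d s‖) :=
                mul_le_mul_of_nonneg_left (hgbound s) (Real.exp_pos _).le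
        calc Real.exp (ζ * τ) * ‖∫ s in (0:ℝ)..t, T τ (T (t - s) (g s))‖
            ≤ Real.exp (ζ * τ) * ∫ s in (0:ℝ)..t, ‖T τ (T (t - s) (g s))‖ :=
              mul_le_mul_of_nonneg_left
                (intervalIntegral.norm_integral_le_integral_norm ht) (Real.exp_pos _).le
          _ = ∫ s in (0:ℝ)..t, Real.exp (ζ * τ) * ‖T τ (T (t - s) (g s))‖ :=
              (intervalIntegral.integral_const_mul _ _).symm
          _ ≤ ∫ s in (0:ℝ)..t, Real.exp (-ζ * (t - s)) * (k * V (x s) + N * ‖d s‖) :=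
              intervalIntegral.integral_mono_on ht hint1 hint2 hpt
      · rw [intervalIntegral.integral_undef hint]
        simpa using hRHSnn
    calc ‖Real.exp (ζ * τ) • T τ (T t (x 0) + ∫ s in (0:ℝ)..t, T (t - s) (g s))‖
        ≤ ‖Real.exp (ζ * τ) • T τ (T t (x 0))‖
          + ‖Real.exp (ζ * τ) • T τ (∫ s in (0:ℝ)..t, T (t - s) (g s))‖ := by
          rw [hsplit]; exact norm_add_le _ _
      _ ≤ _ := add_le_add h1 h2
  -- now apply Grönwall for each fixed time
  intro tf htf
  have hucont : ContinuousOn (fun s => Real.exp (ζ * s) * V (x s)) (Set.Ici 0) :=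
    (Real.continuous_exp.comp (continuous_const.mul continuous_id)).continuousOn.mul hVx
  have hgcont : ContinuousOn (fun s => N * (Real.exp (ζ * s) * ‖d s‖)) (Set.Ici 0) :=
    continuousOn_const.mul
      ((Real.continuous_exp.comp (continuous_const.mul continuous_id)).continuousOn.mul hd.norm)
  have hle : ∀ t : ℝ, 0 ≤ t → t ≤ tf →
      Real.exp (ζ * t) * V (x t) ≤ V (x 0) +
        ∫ s in (0:ℝ)..t, (k * (Real.exp (ζ * s) * V (x s)) + N * (Real.exp (ζ * s) * ‖d s‖)) := by
    intro t ht _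
    have hkey := key t ht
    have hmul := mul_le_mul_of_nonneg_left hkey (Real.exp_pos (ζ * t)).le
    have he1 : Real.exp (ζ * t) * Real.exp (-ζ * t) = 1 := by
      rw [← Real.exp_add]; ring_nf; exact Real.exp_zero
    have he2 : Real.exp (ζ * t) * ∫ s in (0:ℝ)..t,
        Real.exp (-ζ * (t - s)) * (k * V (x s) + N * ‖d s‖)
        = ∫ s in (0:ℝ)..t,
          (k * (Real.exp (ζ * s) * V (x s)) + N * (Real.exp (ζ * s) * ‖d s‖)) := by
      rw [← intervalIntegral.integral_const_mul]
      apply intervalIntegral.integral_congr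
      intro s _
      dsimp only
      have he3 : Real.exp (ζ * t) * Real.exp (-ζ * (t - s)) = Real.exp (ζ * s) := by
        rw [← Real.exp_add]; ring_nf
      calc Real.exp (ζ * t) * (Real.exp (-ζ * (t - s)) * (k * V (x s) + N * ‖d s‖))
          = (Real.exp (ζ * t) * Real.exp (-ζ * (t - s))) * (k * V (x s) + N * ‖d s‖) := by
            ring
        _ = Real.exp (ζ * s) * (k * V (x s) + N * ‖d s‖) := by rw [he3]
        _ = k * (Real.exp (ζ * s) * V (x s)) + N * (Real.exp (ζ * s) * ‖d s‖) := by ring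
    calc Real.exp (ζ * t) * V (x t)
        ≤ Real.exp (ζ * t) * (Real.exp (-ζ * t) * V (x 0) +
            ∫ s in (0:ℝ)..t, Real.exp (-ζ * (t - s)) * (k * V (x s) + N * ‖d s‖)) := hmul
      _ = (Real.exp (ζ * t) * Real.exp (-ζ * t)) * V (x 0) +
            Real.exp (ζ * t) * ∫ s in (0:ℝ)..t,
              Real.exp (-ζ * (t - s)) * (k * V (x s) + N * ‖d s‖) := by ring
      _ = V (x 0) + ∫ s in (0:ℝ)..t,
            (k * (Real.exp (ζ * s) * V (x s)) + N * (Real.exp (ζ * s) * ‖d s‖)) := by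
          rw [he1, he2, one_mul]
  have hgron := gronwall_integral_form (u := fun s => Real.exp (ζ * s) * V (x s))
    (g := fun s => N * (Real.exp (ζ * s) * ‖d s‖)) (k := k) (C := V (x 0)) (tf := tf)
    hk0 htf hucont hgcont hle
  -- unwind the conclusion
  have hfin : Real.exp (ζ * tf) * V (x tf) ≤ Real.exp (k * tf) * V (x 0)
      + ∫ s in (0:ℝ)..tf, Real.exp (k * (tf - s)) * (N * (Real.exp (ζ * s) * ‖d s‖)) := hgron
  have hmul2 := mul_le_mul_of_nonneg_left hfin (Real.exp_pos (-ζ * tf)).le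
  have he4 : Real.exp (-ζ * tf) * (Real.exp (ζ * tf) * V (x tf)) = V (x tf) := by
    rw [← mul_assoc, ← Real.exp_add]; ring_nf; rw [Real.exp_zero, one_mul]
  have he5 : Real.exp (-ζ * tf) * Real.exp (k * tf) = Real.exp (-ℓ * tf) := by
    rw [← Real.exp_add, hℓ]; ring_nf
  have he6 : Real.exp (-ζ * tf) * ∫ s in (0:ℝ)..tf,
      Real.exp (k * (tf - s)) * (N * (Real.exp (ζ * s) * ‖d s‖))
      = N * ∫ s in (0:ℝ)..tf, Real.exp (-ℓ * (tf - s)) * ‖d s‖ := by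
    rw [← intervalIntegral.integral_const_mul, ← intervalIntegral.integral_const_mul]
    apply intervalIntegral.integral_congr
    intro s _
    dsimp only
    have he7 : Real.exp (-ζ * tf) * Real.exp (k * (tf - s)) * Real.exp (ζ * s)
        = Real.exp (-ℓ * (tf - s)) := by
      rw [← Real.exp_add, ← Real.exp_add, hℓ]; ring_nf
    calc Real.exp (-ζ * tf) * (Real.exp (k * (tf - s)) * (N * (Real.exp (ζ * s) * ‖d s‖)))
        = (Real.exp (-ζ * tf) * Real.exp (k * (tf - s)) * Real.exp (ζ * s)) * (N * ‖d s‖) := by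
          ring
      _ = Real.exp (-ℓ * (tf - s)) * (N * ‖d s‖) := by rw [he7]
      _ = N * (Real.exp (-ℓ * (tf - s)) * ‖d s‖) := by ring
  calc V (x tf) = Real.exp (-ζ * tf) * (Real.exp (ζ * tf) * V (x tf)) := he4.symm
    _ ≤ Real.exp (-ζ * tf) * (Real.exp (k * tf) * V (x 0)
        + ∫ s in (0:ℝ)..tf, Real.exp (k * (tf - s)) * (N * (Real.exp (ζ * s) * ‖d s‖))) := hmul2
    _ = (Real.exp (-ζ * tf) * Real.exp (k * tf)) * V (x 0)
        + Real.exp (-ζ * tf) * ∫ s in (0:ℝ)..tf,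
            Real.exp (k * (tf - s)) * (N * (Real.exp (ζ * s) * ‖d s‖)) := by ring
    _ = Real.exp (-ℓ * tf) * V (x 0)
        + N * ∫ s in (0:ℝ)..tf, Real.exp (-ℓ * (tf - s)) * ‖d s‖ := by rw [he5, he6]
end

section
/- (Theorem 1, uniform global attractivity under the event-triggering condition.) Let τ > 0, χ > 0, G ≥ 1, let ψ₁, ψ₂ be of class K∞, κ of class KL, μ of class KL and ω of class L. Define ρ(m, n) = ψ₁⁻¹(κ(ψ₂(G e^{−χ τ} m), n)) and the iterates ℛ⁽¹⁾(m, {n₁}) = ρ(m, n₁), ℛ⁽ᴺ⁾(m, {n_j}_{j=1}^N) = ρ(ℛ⁽ᴺ⁻¹⁾(m, {n_j}_{j=1}^{N−1}), n_N) for N ≥ 2, and assume ℛ⁽ᴺ⁾(m, {n_j}_{j=1}^N) ≤ μ(ω(N) m, max_{1 ≤ j ≤ N} n_j) for all N ≥ 1, m ≥ 0 and n₁, …, n_N ≥ 0. Then for all η > 0 and ε > 0 there exists T > 0 such that: for every function x : [0,∞) → H and every sequence (t_k)_{k≥0} with t₀ = 0 and t_{k+1} ≥ t_k + τ for all k, satisfying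 ‖x(t)‖ ≤ G e^{−χ (t − t_k)} ‖x(t_k)‖ for all t ∈ [t_k, t_k + τ] and ‖x(t)‖ ≤ ρ(‖x(t_k)‖, t − t_k − τ) for all t ∈ [t_k + τ, t_{k+1}] (every k ≥ 0), and with ‖x(0)‖ ≤ η, one has ‖x(t)‖ ≤ ε for all t ≥ T. -/
/-- The iterates `ℛ⁽ᴺ⁾(m, {n_j}_{j=1}^N)` from eq. (20):
`ℛ⁽¹⁾(m,{n₁}) = ρ(m,n₁)` and `ℛ⁽ᴺ⁾(m,{n_j}) = ρ(ℛ⁽ᴺ⁻¹⁾(m,{n_j}_{j<N}), n_N)`. -/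
def iterR (ρ : ℝ → ℝ → ℝ) : ℕ → ℝ → (ℕ → ℝ) → ℝ
  | 0, m, _ => m
  | N + 1, m, n => ρ (iterR ρ N m n) (n (N + 1))

set_option maxHeartbeats 1000000 in
/-- Theorem 1: uniform global attractivity under the
event-triggering condition (21): if `ℛ⁽ᴺ⁾(m, {n_j}) ≤ μ(ω(N) m, max_j n_j)` for a
class-KL function `μ` and a class-L function `ω`, then trajectories satisfying the
sampled-data bound on `[t_k, t_k + τ]` and the Lyapunov bound on `[t_k + τ, t_{k+1}]`
are uniformly globally attracted to the origin: for all `η, ε > 0` there is `T > 0`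
such that `‖x(0)‖ ≤ η` implies `‖x(t)‖ ≤ ε` for all `t ≥ T`. -/
theorem stmt12
    {H : Type*} [NormedAddCommGroup H] [InnerProductSpace ℝ H] [CompleteSpace H]
    (τ χ G : ℝ) (hτ : 0 < τ) (hχ : 0 < χ) (hG : 1 ≤ G)
    -- ψ₁ is of class K∞, with inverse ψ₁inv
    (ψ₁ ψ₁inv : ℝ → ℝ)
    (hψ₁cont : ContinuousOn ψ₁ (Set.Ici 0)) (hψ₁mono : StrictMonoOn ψ₁ (Set.Ici 0))
    (hψ₁0 : ψ₁ 0 = 0) (hψ₁top : Filter.Tendsto ψ₁ Filter.atTop Filter.atTop)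
    (hψ₁pos : ∀ s : ℝ, 0 ≤ s → 0 ≤ ψ₁ s)
    (hψ₁inv : ∀ s : ℝ, 0 ≤ s → ψ₁inv (ψ₁ s) = s ∧ ψ₁ (ψ₁inv s) = s ∧ 0 ≤ ψ₁inv s)
    -- ψ₂ is of class K∞
    (ψ₂ : ℝ → ℝ)
    (hψ₂cont : ContinuousOn ψ₂ (Set.Ici 0)) (hψ₂mono : StrictMonoOn ψ₂ (Set.Ici 0))
    (hψ₂0 : ψ₂ 0 = 0) (hψ₂top : Filter.Tendsto ψ₂ Filter.atTop Filter.atTop)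
    (hψ₂pos : ∀ s : ℝ, 0 ≤ s → 0 ≤ ψ₂ s)
    -- κ is of class KL
    (κ : ℝ → ℝ → ℝ)
    (hκpos : ∀ r s : ℝ, 0 ≤ r → 0 ≤ s → 0 ≤ κ r s)
    (hκK : ∀ s : ℝ, 0 ≤ s → ContinuousOn (fun r => κ r s) (Set.Ici 0) ∧
      StrictMonoOn (fun r => κ r s) (Set.Ici 0) ∧ κ 0 s = 0)
    (hκL : ∀ r : ℝ, 0 ≤ r → AntitoneOn (κ r) (Set.Ici 0) ∧
      Filter.Tendsto (κ r) Filter.atTop (nhds 0))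
    -- μ is of class KL
    (μ : ℝ → ℝ → ℝ)
    (hμpos : ∀ r s : ℝ, 0 ≤ r → 0 ≤ s → 0 ≤ μ r s)
    (hμK : ∀ s : ℝ, 0 ≤ s → ContinuousOn (fun r => μ r s) (Set.Ici 0) ∧
      StrictMonoOn (fun r => μ r s) (Set.Ici 0) ∧ μ 0 s = 0)
    (hμL : ∀ r : ℝ, 0 ≤ r → AntitoneOn (μ r) (Set.Ici 0) ∧
      Filter.Tendsto (μ r) Filter.atTop (nhds 0))
    -- ω is of class L
    (ω : ℝ → ℝ)
    (hωcont : ContinuousOn ω (Set.Ici 0)) (hωanti : AntitoneOn ω (Set.Ici 0))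
    (hωpos : ∀ s : ℝ, 0 ≤ s → 0 ≤ ω s)
    (hωlim : Filter.Tendsto ω Filter.atTop (nhds 0))
    -- the function ρ
    (ρ : ℝ → ℝ → ℝ)
    (hρ : ∀ m n : ℝ, ρ m n = ψ₁inv (κ (ψ₂ (G * Real.exp (-χ * τ) * m)) n))
    -- the event-triggering condition (21): ℛ⁽ᴺ⁾(m,{n_j}) ≤ μ(ω(N) m, max_j n_j)
    (hET : ∀ (N : ℕ) (hN1 : 1 ≤ N), ∀ m : ℝ, 0 ≤ m → ∀ n : ℕ → ℝ, (∀ j : ℕ, 0 ≤ n j) →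
      iterR ρ N m n ≤
        μ (ω (N : ℝ) * m) ((Finset.Icc 1 N).sup' (Finset.nonempty_Icc.mpr hN1) n)) :
    ∀ η : ℝ, 0 < η → ∀ ε : ℝ, 0 < ε → ∃ Tt : ℝ, 0 < Tt ∧
      ∀ (x : ℝ → H) (t : ℕ → ℝ), t 0 = 0 →
        (∀ k : ℕ, t k + τ ≤ t (k + 1)) →
        (∀ k : ℕ, ∀ s : ℝ, t k ≤ s → s ≤ t k + τ →
          ‖x s‖ ≤ G * Real.exp (-χ * (s - t k)) * ‖x (t k)‖) →
        (∀ k : ℕ, ∀ s : ℝ, t k + τ ≤ s → s ≤ t (k + 1) →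
          ‖x s‖ ≤ ρ ‖x (t k)‖ (s - t k - τ)) →
        ‖x 0‖ ≤ η →
        ∀ s : ℝ, Tt ≤ s → ‖x s‖ ≤ ε := by
  intro η hη ε hε
  set c : ℝ := G * Real.exp (-χ * τ) with hc_def
  have hG0 : (0:ℝ) < G := lt_of_lt_of_le one_pos hG
  have hc : 0 < c := mul_pos hG0 (Real.exp_pos _)
  -- ψ₁inv is monotone on nonneg arguments
  have hinv_mono : ∀ a b : ℝ, 0 ≤ a → a ≤ b → ψ₁inv a ≤ ψ₁inv b := by
    intro a b ha hab
    by_contra h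
    push_neg at h
    have hb : 0 ≤ b := ha.trans hab
    obtain ⟨h1a, h2a, h3a⟩ := hψ₁inv a ha
    obtain ⟨h1b, h2b, h3b⟩ := hψ₁inv b hb
    have := hψ₁mono (Set.mem_Ici.mpr h3b) (Set.mem_Ici.mpr h3a) h
    rw [h2a, h2b] at this
    exact absurd hab (not_le.mpr this)
  have hinv_le : ∀ u v : ℝ, 0 ≤ u → 0 ≤ v → u ≤ ψ₁ v → ψ₁inv u ≤ v := by
    intro u v hu hv huv
    have := hinv_mono u (ψ₁ v) hu huv
    rwa [(hψ₁inv v hv).1] at this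
  -- ρ is nonneg
  have hρ_nonneg : ∀ m n : ℝ, 0 ≤ m → 0 ≤ n → 0 ≤ ρ m n := by
    intro m n hm hn
    rw [hρ]
    exact (hψ₁inv _ (hκpos _ _ (hψ₂pos _ (by positivity)) hn)).2.2
  -- ρ monotone in the first argument
  have hρ_mono : ∀ m₁ m₂ n : ℝ, 0 ≤ m₁ → m₁ ≤ m₂ → 0 ≤ n → ρ m₁ n ≤ ρ m₂ n := by
    intro m₁ m₂ n hm₁ hm hn
    rw [hρ, hρ]
    have hm₂ : 0 ≤ m₂ := hm₁.trans hm
    have h1 : ψ₂ (c * m₁) ≤ ψ₂ (c * m₂) :=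
      hψ₂mono.monotoneOn (Set.mem_Ici.mpr (by positivity)) (Set.mem_Ici.mpr (by positivity))
        (by nlinarith)
    have h2 : κ (ψ₂ (c * m₁)) n ≤ κ (ψ₂ (c * m₂)) n :=
      (hκK n hn).2.1.monotoneOn (Set.mem_Ici.mpr (hψ₂pos _ (by positivity)))
        (Set.mem_Ici.mpr (hψ₂pos _ (by positivity))) h1
    exact hinv_mono _ _ (hκpos _ _ (hψ₂pos _ (by positivity)) hn) h2
  -- ρ antitone in the second argument
  have hρ_anti : ∀ m n₁ n₂ : ℝ, 0 ≤ m → 0 ≤ n₁ → n₁ ≤ n₂ → ρ m n₂ ≤ ρ m n₁ := by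
    intro m n₁ n₂ hm hn₁ hn
    rw [hρ, hρ]
    have hr : (0:ℝ) ≤ ψ₂ (c * m) := hψ₂pos _ (by positivity)
    have h2 : κ (ψ₂ (c * m)) n₂ ≤ κ (ψ₂ (c * m)) n₁ :=
      (hκL _ hr).1 (Set.mem_Ici.mpr hn₁) (Set.mem_Ici.mpr (hn₁.trans hn)) hn
    exact hinv_mono _ _ (hκpos _ _ hr (hn₁.trans hn)) h2
  have hψ₁ε : 0 < ψ₁ ε := by
    have := hψ₁mono (Set.mem_Ici.mpr le_rfl) (Set.mem_Ici.mpr hε.le) hε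
    rwa [hψ₁0] at this
  -- Step A : find δ > 0
  have T1 : Filter.Tendsto (fun m : ℝ => κ (ψ₂ (c * m)) 0) (nhdsWithin 0 (Set.Ici 0))
      (nhds 0) := by
    have ha : Filter.Tendsto (fun m : ℝ => c * m) (nhdsWithin 0 (Set.Ici 0))
        (nhdsWithin 0 (Set.Ici 0)) := by
      rw [tendsto_nhdsWithin_iff]
      constructor
      · have : Filter.Tendsto (fun m : ℝ => c * m) (nhds 0) (nhds 0) := by
          simpa using (continuous_mul_left c).tendsto (0:ℝ)
        exact this.mono_left nhdsWithin_le_nhds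
      · filter_upwards [self_mem_nhdsWithin] with m hm
        exact Set.mem_Ici.mpr (mul_nonneg hc.le hm)
    have hb : Filter.Tendsto ψ₂ (nhdsWithin 0 (Set.Ici 0)) (nhdsWithin 0 (Set.Ici 0)) := by
      rw [tendsto_nhdsWithin_iff]
      constructor
      · have := hψ₂cont 0 (Set.mem_Ici.mpr le_rfl)
        rw [ContinuousWithinAt, hψ₂0] at this
        exact this
      · filter_upwards [self_mem_nhdsWithin] with m hm
        exact Set.mem_Ici.mpr (hψ₂pos m hm)
    have hcc : Filter.Tendsto (fun r => κ r 0) (nhdsWithin 0 (Set.Ici 0)) (nhds 0) := by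
      have := (hκK 0 le_rfl).1 0 (Set.mem_Ici.mpr le_rfl)
      rw [ContinuousWithinAt, (hκK 0 le_rfl).2.2] at this
      exact this
    exact hcc.comp (hb.comp ha)
  obtain ⟨δ₁, hδ₁pos, hδ₁⟩ : ∃ δ₁ : ℝ, 0 < δ₁ ∧ ∀ m, 0 ≤ m → m ≤ δ₁ →
      κ (ψ₂ (c * m)) 0 < ψ₁ ε := by
    have hev : ∀ᶠ m in nhdsWithin 0 (Set.Ici 0), κ (ψ₂ (c * m)) 0 < ψ₁ ε :=
      T1.eventually_lt_const hψ₁ε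
    rw [Filter.Eventually, mem_nhdsGE_iff_exists_Icc_subset] at hev
    obtain ⟨u, hu, hsub⟩ := hev
    exact ⟨u, hu, fun m hm hmu => hsub ⟨hm, hmu⟩⟩
  set δ : ℝ := min δ₁ (ε / G) with hδ_def
  have hδpos : 0 < δ := lt_min hδ₁pos (by positivity)
  have hδ_prop : ∀ m, 0 ≤ m → m ≤ δ → (G * m ≤ ε ∧ ∀ n, 0 ≤ n → ρ m n ≤ ε) := by
    intro m hm hmδ
    constructor
    · have h1 : m ≤ ε / G := hmδ.trans (min_le_right _ _)
      calc G * m ≤ G * (ε / G) := by nlinarith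
        _ = ε := by field_simp
    · intro n hn
      have h0 : ρ m n ≤ ρ m 0 := hρ_anti m 0 n hm le_rfl hn
      refine h0.trans ?_
      rw [hρ]
      exact hinv_le _ _ (hκpos _ _ (hψ₂pos _ (by positivity)) le_rfl) hε.le
        (hδ₁ m hm (hmδ.trans (min_le_left _ _))).le
  -- Step B : find N₀
  obtain ⟨N₀, hN₀1, hN₀⟩ : ∃ N₀ : ℕ, 1 ≤ N₀ ∧ μ (ω (N₀ : ℝ) * η) 0 ≤ δ := by
    have T2 : Filter.Tendsto (fun u => μ u 0) (nhdsWithin 0 (Set.Ici 0)) (nhds 0) := by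
      have := (hμK 0 le_rfl).1 0 (Set.mem_Ici.mpr le_rfl)
      rw [ContinuousWithinAt, (hμK 0 le_rfl).2.2] at this
      exact this
    have T3 : Filter.Tendsto (fun N : ℕ => ω (N : ℝ) * η) Filter.atTop
        (nhdsWithin 0 (Set.Ici 0)) := by
      rw [tendsto_nhdsWithin_iff]
      constructor
      · have := (hωlim.comp tendsto_natCast_atTop_atTop).mul_const η
        simpa using this
      · filter_upwards with N
        exact Set.mem_Ici.mpr (mul_nonneg (hωpos _ (Nat.cast_nonneg N)) hη.le)
    have T4 := T2.comp T3
    have hev : ∀ᶠ N : ℕ in Filter.atTop, μ (ω (N:ℝ) * η) 0 < δ :=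
      T4.eventually_lt_const hδpos
    obtain ⟨N₁, hN₁⟩ := Filter.eventually_atTop.mp hev
    exact ⟨max N₁ 1, le_max_right _ _, (hN₁ _ (le_max_left _ _)).le⟩
  -- Step C : the bound M
  set M : ℝ := max η (μ (ω 1 * η) 0) with hM_def
  have hMη : η ≤ M := le_max_left _ _
  have hM0 : 0 ≤ M := hη.le.trans hMη
  -- Step D : find S₀
  obtain ⟨S₀, hS₀0, hS₀⟩ : ∃ S₀ : ℝ, 0 ≤ S₀ ∧ ∀ n, S₀ ≤ n → κ (ψ₂ (c * M)) n ≤ ψ₁ ε := by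
    have := (hκL (ψ₂ (c * M)) (hψ₂pos _ (by positivity))).2
    have hev := Filter.eventually_atTop.mp (this.eventually_lt_const hψ₁ε)
    obtain ⟨S', hS'⟩ := hev
    exact ⟨max S' 0, le_max_right _ _, fun n hn =>
      (hS' n ((le_max_left _ _).trans hn)).le⟩
  have hSD : ∀ m n : ℝ, 0 ≤ m → m ≤ M → S₀ ≤ n → ρ m n ≤ ε := by
    intro m n hm hmM hn
    rw [hρ]
    have hn0 : 0 ≤ n := hS₀0.trans hn
    have h1 : ψ₂ (c * m) ≤ ψ₂ (c * M) :=
      hψ₂mono.monotoneOn (Set.mem_Ici.mpr (by positivity)) (Set.mem_Ici.mpr (by positivity))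
        (by nlinarith)
    have h2 : κ (ψ₂ (c * m)) n ≤ κ (ψ₂ (c * M)) n :=
      (hκK n hn0).2.1.monotoneOn (Set.mem_Ici.mpr (hψ₂pos _ (by positivity)))
        (Set.mem_Ici.mpr (hψ₂pos _ (by positivity))) h1
    exact hinv_le _ _ (hκpos _ _ (hψ₂pos _ (by positivity)) hn0) hε.le
      (h2.trans (hS₀ n hn))
  -- Step E : find B
  obtain ⟨B, hB0, hB⟩ : ∃ B : ℝ, 0 ≤ B ∧ ∀ b, B ≤ b → μ (ω 1 * η) b ≤ δ := by
    have hr : (0:ℝ) ≤ ω 1 * η := mul_nonneg (hωpos 1 one_pos.le) hη.le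
    have hev := Filter.eventually_atTop.mp ((hμL _ hr).2.eventually_lt_const hδpos)
    obtain ⟨B', hB'⟩ := hev
    exact ⟨max B' 0, le_max_right _ _, fun b hb =>
      (hB' b ((le_max_left _ _).trans hb)).le⟩
  -- the time T
  refine ⟨(N₀ : ℝ) * (B + τ) + S₀ + τ + 1, by positivity, ?_⟩
  intro x t ht0 hstep hexp hρbd hx0 s hs
  set Tt : ℝ := (N₀ : ℝ) * (B + τ) + S₀ + τ + 1 with hTt_def
  have hN₀R : (1:ℝ) ≤ (N₀ : ℝ) := by exact_mod_cast hN₀1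
  -- the gap sequence
  set n : ℕ → ℝ := fun j => max (t j - t (j - 1) - τ) 0 with hn_def
  have hn_nonneg : ∀ j, 0 ≤ n j := fun j => le_max_right _ _
  have hn_eq : ∀ k : ℕ, n (k + 1) = t (k + 1) - t k - τ := by
    intro k
    have h := hstep k
    simp only [hn_def, Nat.add_sub_cancel]
    exact max_eq_left (by linarith)
  -- norms at sample times bounded by the iterates
  have claim1 : ∀ k : ℕ, ‖x (t k)‖ ≤ iterR ρ k ‖x 0‖ n ∧ 0 ≤ iterR ρ k ‖x 0‖ n := by
    intro k
    induction k with
    | zero => simp [iterR, ht0]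
    | succ k ih =>
      have h1 : ‖x (t (k+1))‖ ≤ ρ ‖x (t k)‖ (t (k+1) - t k - τ) :=
        hρbd k (t (k+1)) (hstep k) le_rfl
      have h2 : ρ ‖x (t k)‖ (t (k+1) - t k - τ) = ρ ‖x (t k)‖ (n (k+1)) := by
        rw [hn_eq k]
      have h3 : ρ ‖x (t k)‖ (n (k+1)) ≤ ρ (iterR ρ k ‖x 0‖ n) (n (k+1)) :=
        hρ_mono _ _ _ (norm_nonneg _) ih.1 (hn_nonneg _)
      constructor
      · show ‖x (t (k+1))‖ ≤ ρ (iterR ρ k ‖x 0‖ n) (n (k+1))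
        calc ‖x (t (k+1))‖ ≤ ρ ‖x (t k)‖ (n (k+1)) := h2 ▸ h1
          _ ≤ _ := h3
      · exact hρ_nonneg _ _ ih.2 (hn_nonneg _)
  -- bound via the event-triggering condition
  have claim2 : ∀ k : ℕ, ∀ hk : 1 ≤ k, ‖x (t k)‖ ≤
      μ (ω (k : ℝ) * ‖x 0‖) ((Finset.Icc 1 k).sup' (Finset.nonempty_Icc.mpr hk) n) :=
    fun k hk => (claim1 k).1.trans (hET k hk ‖x 0‖ (norm_nonneg _) n hn_nonneg)
  have hsup_nonneg : ∀ k : ℕ, ∀ hk : 1 ≤ k,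
      0 ≤ (Finset.Icc 1 k).sup' (Finset.nonempty_Icc.mpr hk) n := by
    intro k hk
    exact (hn_nonneg 1).trans (Finset.le_sup' n (Finset.mem_Icc.mpr ⟨le_rfl, hk⟩))
  have hωk_le : ∀ k : ℕ, 1 ≤ k → ω (k : ℝ) * ‖x 0‖ ≤ ω 1 * η := by
    intro k hk
    have h1 : ω (k : ℝ) ≤ ω 1 :=
      hωanti (Set.mem_Ici.mpr one_pos.le) (Set.mem_Ici.mpr (Nat.cast_nonneg k))
        (by exact_mod_cast hk)
    exact mul_le_mul h1 hx0 (norm_nonneg _) (hωpos 1 one_pos.le)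
  -- bound M on all sample points
  have claim3 : ∀ k : ℕ, ‖x (t k)‖ ≤ M := by
    intro k
    rcases Nat.eq_zero_or_pos k with hk | hk
    · rw [hk, ht0]; exact hx0.trans hMη
    · have h1 := claim2 k hk
      set S := (Finset.Icc 1 k).sup' (Finset.nonempty_Icc.mpr hk) n with hS
      have hS0 := hsup_nonneg k hk
      have hωn : 0 ≤ ω (k:ℝ) * ‖x 0‖ :=
        mul_nonneg (hωpos _ (Nat.cast_nonneg k)) (norm_nonneg _)
      have h2 : μ (ω (k:ℝ) * ‖x 0‖) S ≤ μ (ω (k:ℝ) * ‖x 0‖) 0 :=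
        (hμL _ hωn).1 (Set.mem_Ici.mpr le_rfl) (Set.mem_Ici.mpr hS0) hS0
      have h3 : μ (ω (k:ℝ) * ‖x 0‖) 0 ≤ μ (ω 1 * η) 0 :=
        (hμK 0 le_rfl).2.1.monotoneOn (Set.mem_Ici.mpr hωn)
          (Set.mem_Ici.mpr (mul_nonneg (hωpos 1 one_pos.le) hη.le)) (hωk_le k hk)
      exact h1.trans (h2.trans (h3.trans (le_max_right _ _)))
  -- sample points past N₀ are below δ
  have claim4 : ∀ k : ℕ, N₀ ≤ k → ‖x (t k)‖ ≤ δ := by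
    intro k hk
    have hk1 : 1 ≤ k := hN₀1.trans hk
    have h1 := claim2 k hk1
    set S := (Finset.Icc 1 k).sup' (Finset.nonempty_Icc.mpr hk1) n with hS
    have hS0 := hsup_nonneg k hk1
    have hωn : 0 ≤ ω (k:ℝ) * ‖x 0‖ :=
      mul_nonneg (hωpos _ (Nat.cast_nonneg k)) (norm_nonneg _)
    have h2 : μ (ω (k:ℝ) * ‖x 0‖) S ≤ μ (ω (k:ℝ) * ‖x 0‖) 0 :=
      (hμL _ hωn).1 (Set.mem_Ici.mpr le_rfl) (Set.mem_Ici.mpr hS0) hS0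
    have hωle : ω (k:ℝ) * ‖x 0‖ ≤ ω (N₀:ℝ) * η := by
      have h1' : ω (k : ℝ) ≤ ω (N₀:ℝ) :=
        hωanti (Set.mem_Ici.mpr (Nat.cast_nonneg _)) (Set.mem_Ici.mpr (Nat.cast_nonneg k))
          (by exact_mod_cast hk)
      exact mul_le_mul h1' hx0 (norm_nonneg _) (hωpos _ (Nat.cast_nonneg _))
    have h3 : μ (ω (k:ℝ) * ‖x 0‖) 0 ≤ μ (ω (N₀:ℝ) * η) 0 :=
      (hμK 0 le_rfl).2.1.monotoneOn (Set.mem_Ici.mpr hωn)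
        (Set.mem_Ici.mpr (mul_nonneg (hωpos _ (Nat.cast_nonneg _)) hη.le)) hωle
    exact h1.trans (h2.trans (h3.trans hN₀))
  -- the sup of gaps controls t k
  have claim5 : ∀ k : ℕ, ∀ hk : 1 ≤ k,
      t k ≤ (k:ℝ) * ((Finset.Icc 1 k).sup' (Finset.nonempty_Icc.mpr hk) n) + (k:ℝ) * τ := by
    intro k
    induction k with
    | zero => intro hk; exact absurd hk (by norm_num)
    | succ k ih =>
      intro _
      rcases Nat.eq_zero_or_pos k with hk0 | hk0
      · subst hk0
        have h1 : t 1 = n 1 + τ := by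
          have := hn_eq 0
          rw [ht0] at this
          simp at this ⊢
          linarith
        have h2 : (Finset.Icc 1 1).sup' (Finset.nonempty_Icc.mpr le_rfl) n = n 1 := by
          norm_num
        rw [h2]
        push_cast
        linarith [h1.le]
      · have ihk := ih hk0
        have hsub : Finset.Icc 1 k ⊆ Finset.Icc 1 (k+1) :=
          Finset.Icc_subset_Icc le_rfl (Nat.le_succ k)
        have hmono : (Finset.Icc 1 k).sup' (Finset.nonempty_Icc.mpr hk0) n ≤
            (Finset.Icc 1 (k+1)).sup' (Finset.nonempty_Icc.mpr (Nat.le_succ_of_le hk0)) n :=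
          Finset.sup'_mono n hsub (Finset.nonempty_Icc.mpr hk0)
        have hmem : n (k+1) ≤
            (Finset.Icc 1 (k+1)).sup' (Finset.nonempty_Icc.mpr (Nat.le_succ_of_le hk0)) n :=
          Finset.le_sup' n (Finset.mem_Icc.mpr ⟨Nat.le_succ_of_le hk0, le_rfl⟩)
        have hstep' : t (k+1) = t k + n (k+1) + τ := by
          have := hn_eq k; linarith
        have hk0R : (0:ℝ) ≤ (k:ℝ) := Nat.cast_nonneg k
        have : t (k+1) ≤ (k:ℝ) * ((Finset.Icc 1 (k+1)).sup'
            (Finset.nonempty_Icc.mpr (Nat.le_succ_of_le hk0)) n) + (k:ℝ) * τ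
            + n (k+1) + τ := by
          rw [hstep']
          have := mul_le_mul_of_nonneg_left hmono hk0R
          linarith
        push_cast
        nlinarith
  -- sample points with large t k and index ≤ N₀ are below δ
  have claim6 : ∀ k : ℕ, 1 ≤ k → Tt - S₀ - τ ≤ t k → ‖x (t k)‖ ≤ δ := by
    intro k hk1 htk
    rcases le_total (N₀:ℕ) k with hk | hk
    · exact claim4 k hk
    · -- k ≤ N₀
      set S := (Finset.Icc 1 k).sup' (Finset.nonempty_Icc.mpr hk1) n with hS
      have hS0 := hsup_nonneg k hk1
      have hkN : (k:ℝ) ≤ (N₀:ℝ) := by exact_mod_cast hk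
      have hk1R : (1:ℝ) ≤ (k:ℝ) := by exact_mod_cast hk1
      have h5 := claim5 k hk1
      -- t k ≤ k (S + τ) ≤ N₀ (S + τ)
      have hup : t k ≤ (N₀:ℝ) * S + (N₀:ℝ) * τ := by
        have h1 : (k:ℝ) * S ≤ (N₀:ℝ) * S := mul_le_mul_of_nonneg_right hkN hS0
        have h2 : (k:ℝ) * τ ≤ (N₀:ℝ) * τ := mul_le_mul_of_nonneg_right hkN hτ.le
        linarith
      have hSB : B ≤ S := by
        have hTteq : Tt = (N₀:ℝ) * (B + τ) + S₀ + τ + 1 := hTt_def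
        have hN₀pos : (0:ℝ) < (N₀:ℝ) := lt_of_lt_of_le one_pos hN₀R
        have hlt : (N₀:ℝ) * B < (N₀:ℝ) * S := by linarith
        exact ((mul_lt_mul_iff_right₀ hN₀pos).mp hlt).le
      have h1 := claim2 k hk1
      have hωn : 0 ≤ ω (k:ℝ) * ‖x 0‖ :=
        mul_nonneg (hωpos _ (Nat.cast_nonneg k)) (norm_nonneg _)
      have h3 : μ (ω (k:ℝ) * ‖x 0‖) S ≤ μ (ω 1 * η) S :=
        (hμK S hS0).2.1.monotoneOn (Set.mem_Ici.mpr hωn)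
          (Set.mem_Ici.mpr (mul_nonneg (hωpos 1 one_pos.le) hη.le)) (hωk_le k hk1)
      exact h1.trans (h3.trans (hB S hSB))
  -- t grows at least linearly
  have htk_ge : ∀ k : ℕ, (k:ℝ) * τ ≤ t k := by
    intro k
    induction k with
    | zero => simp [ht0]
    | succ k ih =>
      have := hstep k
      push_cast
      linarith
  -- find the interval containing s
  have hTpos : (0:ℝ) < Tt := by positivity
  have hexists : ∃ j : ℕ, s < t j := by
    refine ⟨Nat.floor (s / τ) + 1, ?_⟩
    have h1 := htk_ge (Nat.floor (s / τ) + 1)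
    have h2 : s / τ < (Nat.floor (s / τ) : ℝ) + 1 := Nat.lt_floor_add_one _
    have h3 : s < ((Nat.floor (s / τ) : ℝ) + 1) * τ := by
      rw [div_lt_iff₀ hτ] at h2; linarith
    push_cast at h1
    linarith
  set k' := Nat.find hexists with hk'_def
  have hk'_spec : s < t k' := Nat.find_spec hexists
  have hk'_pos : 1 ≤ k' := by
    by_contra h
    push_neg at h
    interval_cases k'
    · rw [ht0] at hk'_spec; linarith
  set k := k' - 1 with hk_def
  have hkk' : k + 1 = k' := Nat.succ_pred_eq_of_pos hk'_pos
  have htk_le : t k ≤ s := by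
    by_contra h
    push_neg at h
    exact absurd (Nat.find_min' hexists h) (by omega)
  have hsk1 : s ≤ t (k + 1) := by rw [hkk']; exact hk'_spec.le
  -- now split by which segment s is in
  rcases le_total s (t k + τ) with hseg | hseg
  · -- exponential segment
    have hxk : ‖x (t k)‖ ≤ δ := by
      have hk1 : 1 ≤ k := by
        by_contra h
        push_neg at h
        interval_cases k
        · rw [ht0] at hseg
          have : (0:ℝ) ≤ (N₀:ℝ) * (B + τ) := by positivity
          simp only [hTt_def] at hs
          linarith
      apply claim6 k hk1
      have : (0:ℝ) ≤ S₀ := hS₀0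
      linarith
    have h1 := hexp k s htk_le hseg
    have hexp1 : Real.exp (-χ * (s - t k)) ≤ 1 := by
      rw [Real.exp_le_one_iff]
      nlinarith
    have h2 : G * Real.exp (-χ * (s - t k)) * ‖x (t k)‖ ≤ G * ‖x (t k)‖ := by
      have key : Real.exp (-χ * (s - t k)) * ‖x (t k)‖ ≤ 1 * ‖x (t k)‖ :=
        mul_le_mul_of_nonneg_right hexp1 (norm_nonneg _)
      calc G * Real.exp (-χ * (s - t k)) * ‖x (t k)‖
          = G * (Real.exp (-χ * (s - t k)) * ‖x (t k)‖) := by ring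
        _ ≤ G * (1 * ‖x (t k)‖) := mul_le_mul_of_nonneg_left key hG0.le
        _ = G * ‖x (t k)‖ := by ring
    have h3 : G * ‖x (t k)‖ ≤ G * δ := by nlinarith [norm_nonneg (x (t k))]
    have h4 : G * δ ≤ ε := (hδ_prop δ hδpos.le le_rfl).1
    linarith
  · -- Lyapunov segment
    have h1 := hρbd k s hseg hsk1
    have hn0 : 0 ≤ s - t k - τ := by linarith
    rcases le_total S₀ (s - t k - τ) with hbig | hsmall
    · exact h1.trans (hSD _ _ (norm_nonneg _) (claim3 k) hbig)
    · have hxk : ‖x (t k)‖ ≤ δ := by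
        have hk1 : 1 ≤ k := by
          by_contra h
          push_neg at h
          interval_cases k
          · rw [ht0] at hsmall
            have : (0:ℝ) ≤ (N₀:ℝ) * (B + τ) := by positivity
            simp only [hTt_def] at hs
            linarith
        apply claim6 k hk1
        linarith
      exact h1.trans ((hδ_prop _ (norm_nonneg _) hxk).2 _ hn0)
end

section
/- (Corollary 2, exponential stability under the event-triggered mechanism with power-type Lyapunov bounds.) Let τ > 0, χ > 0, G ≥ 1, λ > 0 and ϑ ∈ (0,1), and set ι = min(λ, ln(1/ϑ)/τ). Let x : [0,∞) → H and let (t_k)_{k≥0} satisfy t₀ = 0 and t_{k+1} ≥ t_k + τ for all k, and assume ‖x(t)‖ ≤ G e^{−χ (t − t_k)} ‖x(t_k)‖ for all t ∈ [t_k, t_k + τ] and ‖x(t)‖ ≤ ϑ e^{−λ (t − t_k − τ)} ‖x(t_k)‖ for all t ∈ [t_k + τ, t_{k+1}], for every k ≥ 0. Then ‖x(t_k)‖ ≤ e^{−ι t_k} ‖x(0)‖ for all k ≥ 0, and moreover ‖x(t)‖ ≤ G e^{ι τ} e^{−ι t} ‖x(0)‖ for all t ≥ 0. -/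
/-- Corollary 2: exponential stability under the event-triggered
mechanism with power-type Lyapunov bounds: with `ι = min(λ, ln(1/ϑ)/τ)`, if the
sampled-data bound with overshoot `G` and rate `χ` holds on `[t_k, t_k + τ]` and the
bound `‖x(t)‖ ≤ ϑ e^{−λ(t − t_k − τ)} ‖x(t_k)‖` holds on `[t_k + τ, t_{k+1}]`, then
`‖x(t_k)‖ ≤ e^{−ι t_k} ‖x(0)‖` for all `k` and
`‖x(t)‖ ≤ G e^{ι τ} e^{−ι t} ‖x(0)‖` for all `t ≥ 0`. -/
theorem stmt15
    {H : Type*} [NormedAddCommGroup H] [InnerProductSpace ℝ H] [CompleteSpace H]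
    (τ χ G lam ϑ ι : ℝ) (hτ : 0 < τ) (hχ : 0 < χ) (hG : 1 ≤ G)
    (hlam : 0 < lam) (hϑ0 : 0 < ϑ) (hϑ1 : ϑ < 1)
    (hι : ι = min lam (Real.log (1 / ϑ) / τ))
    (x : ℝ → H) (t : ℕ → ℝ) (ht0 : t 0 = 0)
    (htstep : ∀ k : ℕ, t k + τ ≤ t (k + 1))
    (hbound1 : ∀ k : ℕ, ∀ s : ℝ, t k ≤ s → s ≤ t k + τ →
      ‖x s‖ ≤ G * Real.exp (-χ * (s - t k)) * ‖x (t k)‖)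
    (hbound2 : ∀ k : ℕ, ∀ s : ℝ, t k + τ ≤ s → s ≤ t (k + 1) →
      ‖x s‖ ≤ ϑ * Real.exp (-lam * (s - t k - τ)) * ‖x (t k)‖) :
    (∀ k : ℕ, ‖x (t k)‖ ≤ Real.exp (-ι * t k) * ‖x 0‖) ∧
    (∀ s : ℝ, 0 ≤ s → ‖x s‖ ≤ G * Real.exp (ι * τ) * Real.exp (-ι * s) * ‖x 0‖) := by
  have hι0 : 0 < ι := by
    rw [hι]
    refine lt_min hlam (div_pos (Real.log_pos ?_) hτ)
    rw [one_div]
    exact (one_lt_inv₀ hϑ0).2 hϑ1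
  have hilam : ι ≤ lam := by rw [hι]; exact min_le_left _ _
  have hϑe : ϑ ≤ Real.exp (-ι * τ) := by
    have h1 : ι * τ ≤ Real.log (1 / ϑ) := by
      have h := hι ▸ min_le_right lam (Real.log (1 / ϑ) / τ)
      calc ι * τ ≤ (Real.log (1 / ϑ) / τ) * τ := mul_le_mul_of_nonneg_right h hτ.le
        _ = Real.log (1 / ϑ) := div_mul_cancel₀ _ hτ.ne'
    have h2 : Real.exp (ι * τ) ≤ 1 / ϑ := by
      rw [← Real.exp_log (by positivity : (0:ℝ) < 1 / ϑ)]
      exact Real.exp_le_exp.2 h1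
    have h3 : ϑ * Real.exp (ι * τ) ≤ 1 := by
      rw [div_eq_inv_mul, mul_one] at h2
      calc ϑ * Real.exp (ι * τ) ≤ ϑ * ϑ⁻¹ := by
            exact mul_le_mul_of_nonneg_left h2 hϑ0.le
        _ = 1 := mul_inv_cancel₀ hϑ0.ne'
    rw [neg_mul, Real.exp_neg]
    nlinarith [h3, Real.exp_pos (ι * τ), mul_inv_cancel₀ (Real.exp_pos (ι * τ)).ne']
  have hk : ∀ k : ℕ, ‖x (t k)‖ ≤ Real.exp (-ι * t k) * ‖x 0‖ := by
    intro k
    induction k with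
    | zero => simp [ht0]
    | succ k ih =>
      have h1 := hbound2 k (t (k + 1)) (htstep k) le_rfl
      have hd : 0 ≤ t (k + 1) - t k - τ := by linarith [htstep k]
      have h2 : ϑ * Real.exp (-lam * (t (k + 1) - t k - τ)) ≤
          Real.exp (-ι * (t (k + 1) - t k)) := by
        calc ϑ * Real.exp (-lam * (t (k + 1) - t k - τ))
            ≤ Real.exp (-ι * τ) * Real.exp (-ι * (t (k + 1) - t k - τ)) :=
              mul_le_mul hϑe (Real.exp_le_exp.2 (by nlinarith)) (Real.exp_pos _).le
                (Real.exp_pos _).le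
          _ = Real.exp (-ι * (t (k + 1) - t k)) := by
              rw [← Real.exp_add]; congr 1; ring
      calc ‖x (t (k + 1))‖ ≤ ϑ * Real.exp (-lam * (t (k + 1) - t k - τ)) * ‖x (t k)‖ := h1
        _ ≤ Real.exp (-ι * (t (k + 1) - t k)) * (Real.exp (-ι * t k) * ‖x 0‖) :=
            mul_le_mul h2 ih (norm_nonneg _) (Real.exp_pos _).le
        _ = Real.exp (-ι * (t (k + 1) - t k)) * Real.exp (-ι * t k) * ‖x 0‖ := by ring
        _ = Real.exp (-ι * t (k + 1)) * ‖x 0‖ := by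
            rw [← Real.exp_add]; congr 2; ring
  refine ⟨hk, ?_⟩
  intro s hs
  have hgrow : ∀ k : ℕ, (k : ℝ) * τ ≤ t k := by
    intro k
    induction k with
    | zero => simp [ht0]
    | succ k ih => push_cast; nlinarith [htstep k]
  have hex : ∃ k, s < t k := by
    obtain ⟨n, hn⟩ := exists_nat_gt (s / τ)
    exact ⟨n, lt_of_lt_of_le ((div_lt_iff₀ hτ).1 hn) (hgrow n)⟩
  have hN : s < t (Nat.find hex) := Nat.find_spec hex
  have hN0 : Nat.find hex ≠ 0 := by
    intro h
    rw [h, ht0] at hN; linarith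
  obtain ⟨m, hm⟩ := Nat.exists_eq_succ_of_ne_zero hN0
  have hms : t m ≤ s := by
    by_contra h
    exact Nat.find_min hex (by omega) (lt_of_not_ge h)
  rw [hm] at hN
  rcases le_or_gt s (t m + τ) with hcase | hcase
  · have h1 := hbound1 m s hms hcase
    have hexp1 : Real.exp (-χ * (s - t m)) ≤ 1 := by
      rw [← Real.exp_zero]
      exact Real.exp_le_exp.2 (by nlinarith)
    have hexp2 : Real.exp (-ι * t m) ≤ Real.exp (ι * τ) * Real.exp (-ι * s) := by
      rw [← Real.exp_add]
      exact Real.exp_le_exp.2 (by nlinarith)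
    calc ‖x s‖ ≤ G * Real.exp (-χ * (s - t m)) * ‖x (t m)‖ := h1
      _ ≤ G * 1 * (Real.exp (-ι * t m) * ‖x 0‖) := by
          apply mul_le_mul _ (hk m) (norm_nonneg _) (by positivity)
          exact mul_le_mul_of_nonneg_left hexp1 (by linarith)
      _ = G * (Real.exp (-ι * t m) * ‖x 0‖) := by ring
      _ ≤ G * (Real.exp (ι * τ) * Real.exp (-ι * s) * ‖x 0‖) := by
          apply mul_le_mul_of_nonneg_left _ (by linarith)
          exact mul_le_mul_of_nonneg_right hexp2 (norm_nonneg _)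
      _ = G * Real.exp (ι * τ) * Real.exp (-ι * s) * ‖x 0‖ := by ring
  · have h2 := hbound2 m s hcase.le hN.le
    have hstep : ϑ * Real.exp (-lam * (s - t m - τ)) ≤
        Real.exp (-ι * τ) * Real.exp (-ι * (s - t m - τ)) :=
      mul_le_mul hϑe (Real.exp_le_exp.2 (by nlinarith)) (Real.exp_pos _).le (Real.exp_pos _).le
    have h1G : 1 ≤ G * Real.exp (ι * τ) := by
      nlinarith [Real.one_le_exp (by positivity : (0:ℝ) ≤ ι * τ), Real.exp_pos (ι * τ)]
    calc ‖x s‖ ≤ ϑ * Real.exp (-lam * (s - t m - τ)) * ‖x (t m)‖ := h2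
      _ ≤ Real.exp (-ι * τ) * Real.exp (-ι * (s - t m - τ)) * (Real.exp (-ι * t m) * ‖x 0‖) :=
          mul_le_mul hstep (hk m) (norm_nonneg _) (by positivity)
      _ = Real.exp (-ι * τ) * Real.exp (-ι * (s - t m - τ)) * Real.exp (-ι * t m) * ‖x 0‖ := by
          ring
      _ = Real.exp (-ι * s) * ‖x 0‖ := by
          rw [← Real.exp_add, ← Real.exp_add]; congr 2; ring
      _ ≤ G * Real.exp (ι * τ) * Real.exp (-ι * s) * ‖x 0‖ := by
          have := mul_nonneg (Real.exp_pos (-ι * s)).le (norm_nonneg (x 0))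
          nlinarith
end
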